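/- arXiv:2206.08106 — 13 statements merged into one kernel-verified Lean document; each statement's English description precedes it below -/
import Mathlib

section
/- Let C_n = x_1 x_2 ⋯ x_n x_1 be a cycle on n ≥ 3 vertices, and for each i let L(x_i) be a list of colors with |L(x_i)| ≥ 2 and L(x_i) ⊆ {1, 2, 3}. If there exists a list coloring of C_n with respect to L, then there exist at least two distinct list colorings of C_n with respect to L. -/
/-- A list coloring of the cycle `C_n = x_1 x_2 ⋯ x_n x_1` (vertices indexed by `Fin n`,
with `i` adjacent to `i + 1 (mod n)`) with respect to the list assignment `L`:
each vertex gets a color from its list, and adjacent vertices get distinct colors. -/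
def IsCycleListColoring (n : ℕ) (L : Fin n → Finset ℕ) (c : Fin n → ℕ) : Prop :=
  (∀ i, c i ∈ L i) ∧ ∀ i j : Fin n, ((i : ℕ) + 1) % n = (j : ℕ) → c i ≠ c j

private lemma pair_mem {s : Finset ℕ} {a b : ℕ} (hsub : s ⊆ {a, b}) (hab : a ≠ b)
    (hcard : 2 ≤ s.card) : b ∈ s := by
  have h2 : ({a, b} : Finset ℕ).card = 2 := Finset.card_pair hab
  have h3 : s = {a, b} := Finset.eq_of_subset_of_card_le hsub (by omega)
  rw [h3]; simp

lemma keylemma (n : ℕ) (hn : 3 ≤ n) (D : ℕ → Finset ℕ) (d : ℕ → ℕ)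
    (hcard : ∀ m, m < n → 2 ≤ (D m).card)
    (hmem : ∀ m, m < n → d m ∈ D m)
    (hedge : ∀ m, m + 1 < n → d m ≠ d (m + 1))
    (hwrap : d (n - 1) ≠ d 0)
    (h0 : d 0 ∉ D (n - 1)) :
    ∃ e : ℕ → ℕ, (∀ m, m < n → e m ∈ D m) ∧ (∀ m, m + 1 < n → e m ≠ e (m + 1)) ∧
      e (n - 1) ≠ e 0 ∧ ∃ m, m < n ∧ e m ≠ d m := by
  classical
  by_cases hj : ∃ j, 1 ≤ j ∧ j < n ∧ ¬ (D j ⊆ {d j, d (j - 1)})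
  · obtain ⟨j0, hj1, hj2, hj3⟩ := hj
    set P : ℕ → Prop := fun j => 1 ≤ j ∧ ¬ (D j ⊆ {d j, d (j - 1)}) with hPdef
    set J := Nat.findGreatest P (n - 1) with hJdef
    have hPJ : P J := Nat.findGreatest_spec (by omega : j0 ≤ n - 1) ⟨hj1, hj3⟩
    have hJle : J ≤ n - 1 := Nat.findGreatest_le _
    have hJ1 : 1 ≤ J := hPJ.1
    have hJmax : ∀ k, J < k → k < n → D k ⊆ {d k, d (k - 1)} := by
      intro k h1 h2
      by_contra hcon
      exact Nat.findGreatest_is_greatest h1 (by omega) ⟨by omega, hcon⟩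
    have hspair : ∀ k, J < k → k < n → d (k - 1) ∈ D k := by
      intro k h1 h2
      have hne : d k ≠ d (k - 1) := by
        have h := hedge (k - 1) (by omega)
        rw [show k - 1 + 1 = k by omega] at h
        exact h.symm
      exact pair_mem (hJmax k h1 h2) hne (hcard k h2)
    obtain ⟨a, haD, ha⟩ : ∃ a ∈ D J, a ∉ ({d J, d (J - 1)} : Finset ℕ) := by
      by_contra h
      push_neg at h
      exact hPJ.2 (fun x hx => h x hx)
    rw [Finset.mem_insert, Finset.mem_singleton] at ha
    push_neg at ha
    obtain ⟨ha1, ha2⟩ := ha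
    refine ⟨fun k => if k < J then d k else if k = J then a else d (k - 1), ?_, ?_, ?_, ?_⟩
    · intro k hk
      by_cases h1 : k < J
      · simpa [h1] using hmem k hk
      · by_cases h2 : k = J
        · simp only [if_neg h1, if_pos h2]
          rw [h2]; exact haD
        · simp only [if_neg h1, if_neg h2]
          exact hspair k (by omega) hk
    · intro k hk
      by_cases h1 : k + 1 < J
      · have h0' : k < J := by omega
        simp only [if_pos h1, if_pos h0']
        exact hedge k (by omega)
      · by_cases h2 : k + 1 = J
        · have h0' : k < J := by omega
          simp only [if_pos h0', if_neg (show ¬ k + 1 < J by omega), if_pos h2]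
          intro hEq
          apply ha2
          rw [← hEq, ← h2]
          simp
        · by_cases h3 : k = J
          · simp only [if_neg (show ¬ k < J by omega), if_pos h3,
              if_neg (show ¬ k + 1 < J by omega), if_neg (show ¬ k + 1 = J by omega)]
            rw [show k + 1 - 1 = k by omega, h3]
            exact ha1
          · simp only [if_neg (show ¬ k < J by omega), if_neg h3,
              if_neg (show ¬ k + 1 < J by omega), if_neg (show ¬ k + 1 = J by omega)]
            have h := hedge (k - 1) (by omega)
            rw [show k - 1 + 1 = k by omega] at h
            rw [show k + 1 - 1 = k by omega]
            exact h
    · by_cases hJn : J = n - 1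
      · simp only [if_neg (show ¬ n - 1 < J by omega), if_pos hJn.symm,
          if_pos (show 0 < J by omega)]
        intro hEq
        apply h0
        rw [← hEq, ← hJn]
        exact haD
      · simp only [if_neg (show ¬ n - 1 < J by omega), if_neg (show ¬ n - 1 = J by omega),
          if_pos (show 0 < J by omega)]
        intro hEq
        apply h0
        have h := hspair (n - 1) (by omega) (by omega)
        rwa [hEq] at h
    · refine ⟨n - 1, by omega, ?_⟩
      by_cases hJn : J = n - 1
      · simp only [if_neg (show ¬ n - 1 < J by omega), if_pos hJn.symm]
        rw [← hJn]
        exact ha1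
      · simp only [if_neg (show ¬ n - 1 < J by omega), if_neg (show ¬ n - 1 = J by omega)]
        have h := hedge (n - 2) (by omega)
        rw [show n - 2 + 1 = n - 1 by omega] at h
        rw [show n - 1 - 1 = n - 2 by omega]
        exact h
  · push_neg at hj
    have hspair : ∀ k, 1 ≤ k → k < n → d (k - 1) ∈ D k := by
      intro k h1 h2
      have hne : d k ≠ d (k - 1) := by
        have h := hedge (k - 1) (by omega)
        rw [show k - 1 + 1 = k by omega] at h
        exact h.symm
      exact pair_mem (hj k h1 h2) hne (hcard k h2)
    by_cases hw : d (n - 1) ∈ D 0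
    · refine ⟨fun k => if k = 0 then d (n - 1) else d (k - 1), ?_, ?_, ?_, ⟨0, by omega, ?_⟩⟩
      · intro k hk
        by_cases h1 : k = 0
        · simp only [if_pos h1]; rw [h1]; exact hw
        · simp only [if_neg h1]; exact hspair k (by omega) hk
      · intro k hk
        by_cases h1 : k = 0
        · subst h1
          simp only [if_pos rfl, if_neg one_ne_zero]
          simpa using hwrap
        · simp only [if_neg h1, if_neg (show k + 1 ≠ 0 by omega)]
          have h := hedge (k - 1) (by omega)
          rw [show k - 1 + 1 = k by omega] at h
          rw [show k + 1 - 1 = k by omega]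
          exact h
      · simp only [if_neg (show n - 1 ≠ 0 by omega), if_pos rfl]
        have h := hedge (n - 2) (by omega)
        rw [show n - 2 + 1 = n - 1 by omega] at h
        rw [show n - 1 - 1 = n - 2 by omega]
        exact h
      · simp only [if_pos rfl]; exact hwrap
    · obtain ⟨x, hxD, hx0⟩ := Finset.exists_mem_ne
        (show 1 < (D 0).card by have := hcard 0 (by omega); omega) (d 0)
      have hx1 : x ≠ d (n - 1) := by intro h; exact hw (h ▸ hxD)
      have hK : ∃ K, K ≤ n - 2 ∧ ((K = 0 ∧ x ≠ d 1) ∨ (1 ≤ K ∧ d (K - 1) ≠ d (K + 1))) := by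
        by_contra hcon
        push_neg at hcon
        have hx2 : x = d 1 := by
          have h := hcon 0 (by omega)
          tauto
        have halt : ∀ k, 1 ≤ k → k ≤ n - 2 → d (k - 1) = d (k + 1) := by
          intro k h1 h2
          have h := hcon k h2
          tauto
        have key : ∀ s, s ≤ n - 1 → d s = d 0 ∨ d s = x := by
          intro s
          induction s using Nat.strong_induction_on with
          | _ s ih =>
            intro hs
            match s, ih with
            | 0, _ => exact Or.inl rfl
            | 1, _ => exact Or.inr hx2.symm
            | (s + 2), ih =>
              have h1 := halt (s + 1) (by omega) (by omega)
              rw [show s + 1 - 1 = s by omega] at h1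
              rw [show s + 2 = s + 1 + 1 from rfl, ← h1]
              exact ih s (by omega) (by omega)
        rcases key (n - 1) le_rfl with h | h
        · exact hwrap h
        · exact hx1 h.symm
      obtain ⟨K, hK1, hK2⟩ := hK
      refine ⟨fun k => if k = 0 then x else if k ≤ K then d (k - 1) else d k, ?_, ?_, ?_,
        ⟨0, by omega, ?_⟩⟩
      · intro k hk
        by_cases h1 : k = 0
        · simp only [if_pos h1]; rw [h1]; exact hxD
        · by_cases h2 : k ≤ K
          · simp only [if_neg h1, if_pos h2]
            exact hspair k (by omega) hk
          · simp only [if_neg h1, if_neg h2]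
            exact hmem k hk
      · intro k hk
        by_cases h1 : k = 0
        · subst h1
          by_cases h2 : 1 ≤ K
          · simp only [if_pos rfl, if_neg one_ne_zero, if_pos h2]
            simpa using hx0
          · simp only [if_pos rfl, if_neg one_ne_zero, if_neg (show ¬ 1 ≤ K by omega)]
            rcases hK2 with ⟨_, hv⟩ | ⟨h1', _⟩
            · exact hv
            · omega
        · by_cases h2 : k + 1 ≤ K
          · simp only [if_neg h1, if_pos (show k ≤ K by omega),
              if_neg (show k + 1 ≠ 0 by omega), if_pos h2]
            have h := hedge (k - 1) (by omega)
            rw [show k - 1 + 1 = k by omega] at h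
            rw [show k + 1 - 1 = k by omega]
            exact h
          · by_cases h3 : k ≤ K
            · have hkK : k = K := by omega
              simp only [if_neg h1, if_pos h3, if_neg (show k + 1 ≠ 0 by omega), if_neg h2]
              rcases hK2 with ⟨hKe, _⟩ | ⟨_, hv⟩
              · omega
              · rw [hkK]; exact hv
            · simp only [if_neg h1, if_neg h3, if_neg (show k + 1 ≠ 0 by omega),
                if_neg (show ¬ k + 1 ≤ K by omega)]
              exact hedge k hk
      · simp only [if_neg (show n - 1 ≠ 0 by omega), if_neg (show ¬ n - 1 ≤ K by omega),
          if_pos rfl]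
        exact hx1.symm
      · simp only [if_pos rfl]; exact hx0

/-- If every list has at least two colors, all lists are contained in `{1, 2, 3}`,
and the cycle `C_n` (`n ≥ 3`) admits a list coloring, then it admits at least two
distinct list colorings. -/
theorem cycle_two_list_colorings (n : ℕ) (hn : 3 ≤ n) (L : Fin n → Finset ℕ)
    (hL2 : ∀ i, 2 ≤ (L i).card) (hL3 : ∀ i, L i ⊆ ({1, 2, 3} : Finset ℕ))
    (hex : ∃ c : Fin n → ℕ, IsCycleListColoring n L c) :
    ∃ c₁ c₂ : Fin n → ℕ, c₁ ≠ c₂ ∧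
      IsCycleListColoring n L c₁ ∧ IsCycleListColoring n L c₂ := by
  clear hL3
  obtain ⟨m, rfl⟩ : ∃ m, n = m + 3 := ⟨n - 3, by omega⟩
  obtain ⟨c, hc⟩ := hex
  have hsucc : ∀ i : Fin (m + 3), ((i : ℕ) + 1) % (m + 3) = ((i + 1 : Fin (m + 3)) : ℕ) := by
    intro i
    rw [Fin.val_add, Fin.val_one]
  have edge_iff : ∀ (M : Fin (m + 3) → Finset ℕ) (f : Fin (m + 3) → ℕ),
      IsCycleListColoring (m + 3) M f ↔ ((∀ i, f i ∈ M i) ∧ ∀ i, f i ≠ f (i + 1)) := by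
    intro M f
    constructor
    · rintro ⟨h1, h2⟩
      exact ⟨h1, fun i => h2 i (i + 1) (hsucc i)⟩
    · rintro ⟨h1, h2⟩
      refine ⟨h1, fun i j hij => ?_⟩
      have hj : j = i + 1 := Fin.ext (hij.symm.trans (hsucc i))
      rw [hj]; exact h2 i
  rw [edge_iff] at hc
  obtain ⟨hcmem, hcedge⟩ := hc
  by_cases hshift : ∀ i, c (i + 1) ∈ L i
  · refine ⟨c, fun i => c (i + 1), ?_, (edge_iff L c).2 ⟨hcmem, hcedge⟩,
      (edge_iff L _).2 ⟨hshift, fun i => hcedge (i + 1)⟩⟩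
    intro h
    exact hcedge 0 (congrFun h 0)
  · push_neg at hshift
    obtain ⟨p, hp⟩ := hshift
    set t : Fin (m + 3) := p + 1 with ht
    have hdedge : ∀ i : Fin (m + 3), c (i + t) ≠ c ((i + 1) + t) := by
      intro i
      rw [add_right_comm i 1 t]
      exact hcedge (i + t)
    have hlt : ∀ k : ℕ, k % (m + 3) < m + 3 := fun k => Nat.mod_lt _ (by omega)
    have hfin1 : ∀ (k : ℕ) (hk : k + 1 < m + 3),
        (⟨k, by omega⟩ : Fin (m + 3)) + 1 = ⟨k + 1, hk⟩ := by
      intro k hk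
      apply Fin.ext
      rw [Fin.val_add, Fin.val_one]
      simp [Nat.mod_eq_of_lt hk]
    have hfin2 : (⟨m + 2, by omega⟩ : Fin (m + 3)) + 1 = 0 := by
      apply Fin.ext
      rw [Fin.val_add, Fin.val_one]
      simp
    have hDf0 : (⟨m + 2, by omega⟩ : Fin (m + 3)) + t = p := by
      rw [ht, add_comm p 1, ← add_assoc, hfin2, zero_add]
    have h0t : (⟨0 % (m + 3), hlt 0⟩ : Fin (m + 3)) + t = p + 1 := by
      rw [ht, show (⟨0 % (m + 3), hlt 0⟩ : Fin (m + 3)) = 0 from Fin.ext (by simp), zero_add]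
    have H3 : ∀ k, k + 1 < m + 3 →
        c ((⟨k % (m + 3), hlt k⟩ : Fin (m + 3)) + t) ≠
          c ((⟨(k + 1) % (m + 3), hlt (k + 1)⟩ : Fin (m + 3)) + t) := by
      intro k hk
      have e1 : (⟨k % (m + 3), hlt k⟩ : Fin (m + 3)) = ⟨k, by omega⟩ :=
        Fin.ext (Nat.mod_eq_of_lt (by omega))
      have e2 : (⟨(k + 1) % (m + 3), hlt (k + 1)⟩ : Fin (m + 3)) = ⟨k, by omega⟩ + 1 := by
        rw [hfin1 k hk]
        exact Fin.ext (Nat.mod_eq_of_lt hk)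
      rw [e1, e2]
      exact hdedge ⟨k, by omega⟩
    have H4 : c ((⟨(m + 3 - 1) % (m + 3), hlt (m + 3 - 1)⟩ : Fin (m + 3)) + t) ≠
        c ((⟨0 % (m + 3), hlt 0⟩ : Fin (m + 3)) + t) := by
      have e1 : (⟨(m + 3 - 1) % (m + 3), hlt (m + 3 - 1)⟩ : Fin (m + 3)) = ⟨m + 2, by omega⟩ :=
        Fin.ext (Nat.mod_eq_of_lt (by omega))
      have e2 : (⟨0 % (m + 3), hlt 0⟩ : Fin (m + 3)) = ⟨m + 2, by omega⟩ + 1 := by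
        rw [hfin2]; exact Fin.ext (by simp)
      rw [e1, e2]
      exact hdedge ⟨m + 2, by omega⟩
    have H5 : c ((⟨0 % (m + 3), hlt 0⟩ : Fin (m + 3)) + t) ∉
        L ((⟨(m + 3 - 1) % (m + 3), hlt (m + 3 - 1)⟩ : Fin (m + 3)) + t) := by
      have e1 : (⟨(m + 3 - 1) % (m + 3), hlt (m + 3 - 1)⟩ : Fin (m + 3)) = ⟨m + 2, by omega⟩ :=
        Fin.ext (Nat.mod_eq_of_lt (by omega))
      rw [e1, hDf0, h0t]
      exact hp
    obtain ⟨e, he1, he2, he3, k0, hk0, hk0'⟩ :=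
      keylemma (m + 3) (by omega)
        (fun k => L ((⟨k % (m + 3), hlt k⟩ : Fin (m + 3)) + t))
        (fun k => c ((⟨k % (m + 3), hlt k⟩ : Fin (m + 3)) + t))
        (fun k _ => hL2 _)
        (fun k _ => hcmem _)
        H3 H4 H5
    refine ⟨c, fun i => e ((i - t) : Fin (m + 3)).val, ?_, (edge_iff L c).2 ⟨hcmem, hcedge⟩, ?_⟩
    · intro h
      apply hk0'
      have h1 := congrFun h ((⟨k0, hk0⟩ : Fin (m + 3)) + t)
      rw [add_sub_cancel_right] at h1
      simp only [Nat.mod_eq_of_lt hk0]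
      exact h1.symm
    · rw [edge_iff]
      constructor
      · intro i
        have h1 := he1 ((i - t).val) (i - t).isLt
        have h2 : (⟨(i - t).val % (m + 3), hlt _⟩ : Fin (m + 3)) = i - t := by
          apply Fin.ext
          simp [Nat.mod_eq_of_lt (i - t).isLt]
        rw [h2, sub_add_cancel] at h1
        exact h1
      · intro i
        have h2 : i + 1 - t = (i - t) + 1 := add_sub_right_comm i 1 t
        rw [h2]
        rw [← hsucc (i - t)]
        by_cases h3 : ((i - t : Fin (m + 3)) : ℕ) = m + 2
        · rw [h3, show (m + 2 + 1) % (m + 3) = 0 from Nat.mod_self (m + 3)]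
          have h7 := he3
          rw [show m + 3 - 1 = m + 2 by omega] at h7
          exact h7
        · have h5 : ((i - t : Fin (m + 3)) : ℕ) + 1 < m + 3 := by
            have := (i - t : Fin (m + 3)).isLt; omega
          rw [Nat.mod_eq_of_lt h5]
          exact he2 _ h5
end

section
/- Let G be a finite graph with chromatic number χ(G) = k ≥ 3, let S ⊂ V(G), and let C₀ be a proper k-coloring of G[S] that extends to a proper k-coloring of G. If G has an edge xy with x ∉ S and y ∉ S such that deg(x) ≤ k−1 and deg(y) ≤ k−1, then C₀ is not a Sudoku coloring of G; that is, C₀ has at least two distinct extensions to proper k-colorings of G. -/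
open SimpleGraph

/-- Let `G` be a finite graph with chromatic number `k ≥ 3`, `S` a proper subset of the
vertex set, and `C₀` a proper `k`-coloring of the induced subgraph `G[S]` that extends to
a proper `k`-coloring of `G`. If `G` has an edge `xy` with `x ∉ S`, `y ∉ S`,
`deg(x) ≤ k - 1` and `deg(y) ≤ k - 1`, then `C₀` is not a Sudoku coloring:
it has at least two distinct extensions to proper `k`-colorings of `G`. -/
theorem not_sudoku_of_uncolored_low_degree_edge {V : Type*} [Fintype V] [DecidableEq V]
    (G : SimpleGraph V) [DecidableRel G.Adj] (k : ℕ) (hk : 3 ≤ k)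
    (hχ : G.chromaticNumber = k) (S : Set V) (hS : S ⊂ Set.univ) (C₀ : V → Fin k)
    (hprop : ∀ u ∈ S, ∀ v ∈ S, G.Adj u v → C₀ u ≠ C₀ v)
    (hext : ∃ c : G.Coloring (Fin k), ∀ u ∈ S, c u = C₀ u)
    (x y : V) (hxy : G.Adj x y) (hx : x ∉ S) (hy : y ∉ S)
    (hdx : G.degree x ≤ k - 1) (hdy : G.degree y ≤ k - 1) :
    ∃ c₁ c₂ : G.Coloring (Fin k), c₁ ≠ c₂ ∧
      (∀ u ∈ S, c₁ u = C₀ u) ∧ (∀ u ∈ S, c₂ u = C₀ u) := by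
  classical
  obtain ⟨c, hc⟩ := hext
  have hyx : y ∈ G.neighborFinset x := by simp [hxy]
  have hxN : x ∈ G.neighborFinset y := by simp [hxy.symm]
  have hdegx : (G.neighborFinset x).card = G.degree x := rfl
  have hdegy : (G.neighborFinset y).card = G.degree y := rfl
  have hdx1 : 1 ≤ G.degree x := by rw [← hdegx]; exact Finset.card_pos.mpr ⟨y, hyx⟩
  have hdy1 : 1 ≤ G.degree y := by rw [← hdegy]; exact Finset.card_pos.mpr ⟨x, hxN⟩
  -- pick a new color `a` for x
  have hFxcard : (((G.neighborFinset x).erase y).image c ∪ {c x}).card < k := by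
    have h2 : (((G.neighborFinset x).erase y).image c).card ≤ G.degree x - 1 := by
      calc (((G.neighborFinset x).erase y).image c).card
          ≤ ((G.neighborFinset x).erase y).card := Finset.card_image_le
        _ = G.degree x - 1 := by rw [Finset.card_erase_of_mem hyx, hdegx]
    have h3 := Finset.card_union_le (((G.neighborFinset x).erase y).image c) ({c x} : Finset (Fin k))
    rw [Finset.card_singleton] at h3
    omega
  have : ∃ a : Fin k, a ∉ (((G.neighborFinset x).erase y).image c ∪ {c x}) := by
    by_contra h
    push_neg at h
    have hsub : (Finset.univ : Finset (Fin k)) ⊆ _ := fun a _ => h a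
    have hle := Finset.card_le_card hsub
    rw [Finset.card_univ, Fintype.card_fin] at hle
    omega
  obtain ⟨a, ha⟩ := this
  rw [Finset.mem_union, not_or, Finset.mem_singleton] at ha
  have hax : a ≠ c x := ha.2
  have haN : ∀ z ∈ (G.neighborFinset x).erase y, a ≠ c z := fun z hz h =>
    ha.1 (Finset.mem_image.mpr ⟨z, hz, h.symm⟩)
  -- pick a new color `b` for y
  have hFycard : (((G.neighborFinset y).erase x).image c ∪ {a}).card < k := by
    have h2 : (((G.neighborFinset y).erase x).image c).card ≤ G.degree y - 1 := by
      calc (((G.neighborFinset y).erase x).image c).card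
          ≤ ((G.neighborFinset y).erase x).card := Finset.card_image_le
        _ = G.degree y - 1 := by rw [Finset.card_erase_of_mem hxN, hdegy]
    have h3 := Finset.card_union_le (((G.neighborFinset y).erase x).image c) ({a} : Finset (Fin k))
    rw [Finset.card_singleton] at h3
    omega
  have : ∃ b : Fin k, b ∉ (((G.neighborFinset y).erase x).image c ∪ {a}) := by
    by_contra h
    push_neg at h
    have hsub : (Finset.univ : Finset (Fin k)) ⊆ _ := fun b _ => h b
    have hle := Finset.card_le_card hsub
    rw [Finset.card_univ, Fintype.card_fin] at hle
    omega
  obtain ⟨b, hb⟩ := this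
  rw [Finset.mem_union, not_or, Finset.mem_singleton] at hb
  have hba : b ≠ a := hb.2
  have hbN : ∀ z ∈ (G.neighborFinset y).erase x, b ≠ c z := fun z hz h =>
    hb.1 (Finset.mem_image.mpr ⟨z, hz, h.symm⟩)
  have hxney : x ≠ y := G.ne_of_adj hxy
  have hynex : y ≠ x := hxney.symm
  set f : V → Fin k := fun u => if u = x then a else if u = y then b else c u with hf
  have hfx : f x = a := by simp [hf]
  have hfy : f y = b := by simp [hf, hynex]
  have hfo : ∀ u, u ≠ x → u ≠ y → f u = c u := by intro u h1 h2; simp [hf, h1, h2]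
  have hfvalid : ∀ u v : V, G.Adj u v → f u ≠ f v := by
    intro u v huv
    by_cases hux : u = x
    · have hvx : v ≠ x := fun h => G.ne_of_adj huv (hux.trans h.symm)
      by_cases hvy : v = y
      · rw [hux, hvy, hfx, hfy]; exact fun h => hba h.symm
      · rw [hux, hfx, hfo v hvx hvy]
        exact haN v (Finset.mem_erase.mpr ⟨hvy, by rw [mem_neighborFinset]; exact hux ▸ huv⟩)
    · by_cases huy : u = y
      · have hvy : v ≠ y := fun h => G.ne_of_adj huv (huy.trans h.symm)
        by_cases hvx : v = x
        · rw [huy, hvx, hfx, hfy]; exact hba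
        · rw [huy, hfy, hfo v hvx hvy]
          exact hbN v (Finset.mem_erase.mpr ⟨hvx, by rw [mem_neighborFinset]; exact huy ▸ huv⟩)
      · rw [hfo u hux huy]
        by_cases hvx : v = x
        · rw [hvx, hfx]
          have : a ≠ c u := haN u (Finset.mem_erase.mpr ⟨huy,
            by rw [mem_neighborFinset]; exact hvx ▸ huv.symm⟩)
          exact fun h => this h.symm
        · by_cases hvy : v = y
          · rw [hvy, hfy]
            have : b ≠ c u := hbN u (Finset.mem_erase.mpr ⟨hux,
              by rw [mem_neighborFinset]; exact hvy ▸ huv.symm⟩)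
            exact fun h => this h.symm
          · rw [hfo v hvx hvy]; exact c.valid huv
  refine ⟨c, SimpleGraph.Coloring.mk f (fun {u v} h => hfvalid u v h), ?_, hc, ?_⟩
  · intro h
    have : c x = f x := by rw [h]; rfl
    rw [hfx] at this
    exact hax this.symm
  · intro u hu
    have hux : u ≠ x := fun h => hx (h ▸ hu)
    have huy : u ≠ y := fun h => hy (h ▸ hu)
    show f u = C₀ u
    rw [hfo u hux huy]
    exact hc u hu
end

section
/- Let G be a finite connected graph of order n ≥ 2. Then sn(G) = 1 if and only if G is bipartite. -/
open SimpleGraph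

/-- `C₀` is a Sudoku coloring of `G` on the vertex set `S`, with colors in `Fin k`:
there is exactly one proper `k`-coloring of `G` that restricts to `C₀` on `S`.
(Note that such a `C₀` is automatically a proper coloring of the induced subgraph `G[S]`.) -/
def IsSudokuColoring {V : Type*} (G : SimpleGraph V) (k : ℕ) (S : Set V)
    (C₀ : V → Fin k) : Prop :=
  ∃! c : G.Coloring (Fin k), ∀ v ∈ S, c v = C₀ v

/-- The Sudoku number of a finite graph `G`: the minimum cardinality of a set `S` of
vertices carrying a Sudoku coloring of `G` (with `k = χ(G)` colors). -/
noncomputable def sudokuNumber {V : Type*} [Fintype V] (G : SimpleGraph V) : ℕ :=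
  sInf {n | ∃ (S : Finset V) (C₀ : V → Fin G.chromaticNumber.toNat),
    IsSudokuColoring G G.chromaticNumber.toNat S C₀ ∧ S.card = n}

/-- A graph is bipartite if its vertex set can be partitioned into two parts such that
every edge joins the two parts. -/
def IsBipartite {V : Type*} (G : SimpleGraph V) : Prop :=
  ∃ A : Set V, ∀ u v, G.Adj u v → (u ∈ A ↔ v ∉ A)

/-! Two colors absent from `C₀(S)` could be swapped in the unique extension of `C₀`, and a
`χ(G)`-coloring uses every color; so at most one color is absent and `χ(G) ≤ sn(G) + 1`.
Hence `sn(G) = 1` forces `χ(G) ≤ 2`. Conversely, a 2-coloring of a connected graph is fixed by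
the color of a single vertex, so `sn(G) ≤ 1`, while `sn(G) ≥ χ(G) - 1 = 1` as `G` has an edge. -/

theorem isBipartite_iff_colorable_two {V : Type*} {G : SimpleGraph V} :
    _root_.IsBipartite G ↔ G.Colorable 2 := by
  classical
  constructor
  · rintro ⟨A, hA⟩
    refine ⟨Coloring.mk (fun v => if v ∈ A then 0 else 1) fun {u v} huv => ?_⟩
    have := hA u v huv
    by_cases hu : u ∈ A <;> by_cases hv : v ∈ A <;> simp_all
  · rintro ⟨c⟩
    refine ⟨{v | c v = 0}, fun u v huv => ?_⟩
    have := c.valid huv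
    simp only [Set.mem_ofPred_eq]
    omega

namespace SimpleGraph

variable {V : Type*} {G : SimpleGraph V}

theorem Coloring.apply_eq_of_walk {c c' : G.Coloring (Fin 2)} {u v : V} (p : G.Walk u v)
    (h : c u = c' u) : c v = c' v := by
  induction p with
  | nil => exact h
  | cons hadj _ ih =>
    have := c.valid hadj
    have := c'.valid hadj
    exact ih (by omega)

theorem Coloring.eq_of_preconnected_of_apply_eq (hG : G.Preconnected) {c c' : G.Coloring (Fin 2)}
    {u : V} (h : c u = c' u) : c = c' :=
  RelHom.ext fun v => (hG u v).elim (Coloring.apply_eq_of_walk · h)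

theorem isSudokuColoring_singleton (hG : G.Preconnected) (c : G.Coloring (Fin 2)) (v : V) :
    IsSudokuColoring G 2 {v} c :=
  ⟨c, fun _ _ => rfl, fun _ hc' => Coloring.eq_of_preconnected_of_apply_eq hG (hc' v rfl)⟩

theorem IsSudokuColoring.le_card_add_one {k : ℕ} (hk : G.chromaticNumber = k) {S : Finset V}
    {C₀ : V → Fin k} (h : IsSudokuColoring G k S C₀) : k ≤ S.card + 1 := by
  classical
  obtain ⟨c, hcS, huniq⟩ := h
  by_contra! hlt
  have hunused : 1 < (Finset.univ \ S.image C₀).card := by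
    rw [Finset.card_univ_sdiff, Fintype.card_fin]
    have := S.card_image_le (f := C₀)
    omega
  obtain ⟨a, ha, b, hb, hab⟩ := Finset.one_lt_card.mp hunused
  have hswap : recolorOfEquiv G (Equiv.swap a b) c = c := by
    refine huniq _ fun v hv => ?_
    have hv' : C₀ v ∈ S.image C₀ := Finset.mem_image_of_mem C₀ hv
    change Equiv.swap a b (c v) = C₀ v
    rw [hcS v hv]
    exact Equiv.swap_apply_of_ne_of_ne (ne_of_mem_of_not_mem hv' (Finset.mem_sdiff.mp ha).2)
      (ne_of_mem_of_not_mem hv' (Finset.mem_sdiff.mp hb).2)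
  obtain ⟨w, hw⟩ := le_chromaticNumber_iff_forall_surjective.mp hk.ge c a
  have hswap_w : Equiv.swap a b (c w) = c w := DFunLike.congr_fun hswap w
  rw [hw, Equiv.swap_apply_left] at hswap_w
  exact hab hswap_w.symm

section Fintype

variable [Fintype V]

theorem exists_isSudokuColoring_card_eq_sudokuNumber (G : SimpleGraph V) :
    ∃ (S : Finset V) (C₀ : V → Fin G.chromaticNumber.toNat),
      IsSudokuColoring G G.chromaticNumber.toNat S C₀ ∧ S.card = sudokuNumber G := by
  obtain ⟨c⟩ := G.colorable_chromaticNumber_of_fintype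
  have huniv : IsSudokuColoring G _ (Finset.univ : Finset V) c :=
    ⟨c, fun _ _ => rfl, fun _ hc' => RelHom.ext fun v => hc' v (Finset.mem_univ v)⟩
  exact Nat.sInf_mem (s := {n | ∃ (S : Finset V) (C₀ : V → Fin _), IsSudokuColoring G _ S C₀ ∧
    S.card = n}) ⟨_, _, _, huniv, rfl⟩

theorem sudokuNumber_le_card {k : ℕ} (hk : G.chromaticNumber = k) {S : Finset V}
    {C₀ : V → Fin k} (h : IsSudokuColoring G k S C₀) : sudokuNumber G ≤ S.card := by
  obtain rfl : G.chromaticNumber.toNat = k := by simp [hk]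
  exact Nat.sInf_le ⟨S, C₀, h, rfl⟩

theorem chromaticNumber_toNat_le_sudokuNumber_add_one (G : SimpleGraph V) :
    G.chromaticNumber.toNat ≤ sudokuNumber G + 1 := by
  obtain ⟨S, C₀, h, hS⟩ := exists_isSudokuColoring_card_eq_sudokuNumber G
  have hfin : G.chromaticNumber ≠ ⊤ :=
    chromaticNumber_ne_top_iff_exists.mpr ⟨_, G.colorable_of_fintype⟩
  exact hS ▸ h.le_card_add_one (ENat.natCast_toNat hfin).symm

end Fintype

end SimpleGraph

/-- A finite connected graph of order at least 2 has Sudoku number 1 if and only if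
it is bipartite. -/
theorem sudokuNumber_eq_one_iff_bipartite {V : Type*} [Fintype V] (G : SimpleGraph V)
    (hconn : G.Connected) (hn : 2 ≤ Fintype.card V) :
    sudokuNumber G = 1 ↔ _root_.IsBipartite G := by
  have : Nontrivial V := Fintype.one_lt_card_iff_nontrivial.mp hn
  have hχ := G.chromaticNumber_toNat_le_sudokuNumber_add_one
  rw [isBipartite_iff_colorable_two]
  constructor
  · intro h
    exact G.colorable_chromaticNumber_of_fintype.mono (by omega)
  · intro h2
    have hk : G.chromaticNumber = (2 : ℕ) :=
      chromaticNumber_eq_two_iff.mpr ⟨h2, fun hbot => not_connected_bot (hbot ▸ hconn)⟩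
    obtain ⟨v⟩ := hconn.nonempty
    have hsingle := isSudokuColoring_singleton hconn.preconnected h2.some v
    rw [← Finset.coe_singleton] at hsingle
    have hle := sudokuNumber_le_card hk hsingle
    rw [hk] at hχ
    simp only [ENat.toNat_natCast, Finset.card_singleton] at hχ hle
    omega
end

section
/- Let G be a finite uniquely colorable graph with chromatic number χ(G) = t ≥ 3. Then sn(G) = t − 1. -/
open SimpleGraph

/-- Any proper `t`-coloring of a graph with chromatic number `t ≥ 1` is surjective. -/
lemma coloring_surjective {V : Type*} (G : SimpleGraph V) (t : ℕ) (ht : 1 ≤ t)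
    (hχ : G.chromaticNumber = t) (c : G.Coloring (Fin t)) : Function.Surjective c := by
  intro a
  by_contra h
  push_neg at h
  let c' : G.Coloring {b : Fin t // b ≠ a} :=
    Coloring.mk (fun v => ⟨c v, h v⟩) (by
      intro u v huv hcv
      exact c.valid huv (congrArg Subtype.val hcv))
  have hcard : Fintype.card {b : Fin t // b ≠ a} = t - 1 := by
    simp [Fintype.card_subtype_compl]
  have hcol : G.Colorable (t - 1) := hcard ▸ c'.colorable
  have := hcol.chromaticNumber_le
  rw [hχ, Nat.cast_le] at this
  omega

/-- A finite uniquely colorable graph with chromatic number `t ≥ 3` has Sudoku number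
`t - 1`.  Unique colorability: any two proper `t`-colorings differ by a permutation of
the colors (i.e. they induce the same partition of the vertex set into color classes). -/
theorem sudokuNumber_of_uniquely_colorable {V : Type*} [Fintype V] (G : SimpleGraph V)
    (t : ℕ) (ht : 3 ≤ t) (hχ : G.chromaticNumber = t)
    (huniq : ∀ c₁ c₂ : G.Coloring (Fin t), ∃ σ : Equiv.Perm (Fin t), ∀ v, c₂ v = σ (c₁ v)) :
    sudokuNumber G = t - 1 := by
  classical
  have hct : G.chromaticNumber.toNat = t := by rw [hχ]; simp
  have hcol : G.Colorable t := by
    rw [← chromaticNumber_le_iff_colorable, hχ]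
  obtain ⟨c⟩ := hcol
  have hsurj : Function.Surjective c := coloring_surjective G t (by omega) hχ c
  unfold sudokuNumber
  rw [hct]
  -- embedding of `Fin (t-1)` into `Fin t`
  let g : Fin (t - 1) → Fin t := fun i => ⟨i.val, by omega⟩
  have hginj : Function.Injective g := by
    intro i j hij
    simpa [g, Fin.ext_iff] using hij
  -- choose a representative of each of the first `t-1` color classes
  choose f hf using fun i : Fin (t - 1) => hsurj (g i)
  have hfinj : Function.Injective f := by
    intro i j hij
    apply hginj
    rw [← hf i, ← hf j, hij]
  have hmem : (t - 1) ∈ {n | ∃ (S : Finset V) (C₀ : V → Fin t),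
      IsSudokuColoring G t S C₀ ∧ S.card = n} := by
    refine ⟨Finset.image f Finset.univ, c, ⟨c, fun v _ => rfl, ?_⟩, ?_⟩
    · intro c' hc'
      obtain ⟨σ, hσ⟩ := huniq c c'
      have hfix : ∀ j : Fin t, j.val < t - 1 → σ j = j := by
        intro j hj
        have hj' : g ⟨j.val, hj⟩ = j := rfl
        have hv := hc' (f ⟨j.val, hj⟩) (by simp [Finset.mem_image])
        rw [hσ, hf] at hv
        rwa [hj'] at hv
      have hσid : ∀ j : Fin t, σ j = j := by
        intro j
        by_cases hj : j.val < t - 1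
        · exact hfix j hj
        · by_contra hne
          have hlt : (σ j).val < t - 1 := by
            rcases lt_or_ge (σ j).val (t - 1) with h | h
            · exact h
            · have h1 : j.val = t - 1 := by omega
              have h2 : (σ j).val = t - 1 := by have := (σ j).isLt; omega
              exact absurd (Fin.ext (h2.trans h1.symm)) hne
          have h3 := hfix (σ j) hlt
          have h4 := σ.injective h3
          exact hne (by rw [← h4]; exact h3)
      ext v
      rw [hσ, hσid]
    · rw [Finset.card_image_of_injective _ hfinj, Finset.card_univ, Fintype.card_fin]
  refine le_antisymm (Nat.sInf_le hmem) (le_csInf ⟨_, hmem⟩ ?_)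
  -- lower bound
  rintro n ⟨S, C₀, ⟨c₁, hc₁, huniq₁⟩, rfl⟩
  by_contra hlt
  push_neg at hlt
  have hsurj₁ : Function.Surjective c₁ := coloring_surjective G t (by omega) hχ c₁
  set T : Finset (Fin t) := S.image (fun v => c₁ v) with hT
  have hTcard : T.card ≤ S.card := Finset.card_image_le
  have h2 : 1 < Tᶜ.card := by
    have := Finset.card_compl T
    simp only [Fintype.card_fin] at this
    omega
  obtain ⟨a, haT, b, hbT, hab⟩ := Finset.one_lt_card.mp h2
  have haT' : a ∉ T := by simpa using haT
  have hbT' : b ∉ T := by simpa using hbT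
  let σ := Equiv.swap a b
  let c₂ : G.Coloring (Fin t) := Coloring.mk (fun v => σ (c₁ v)) (by
    intro u v huv h
    exact c₁.valid huv (σ.injective h))
  have hc₂ : ∀ v ∈ (S : Set V), c₂ v = C₀ v := by
    intro v hv
    have hvT : c₁ v ∈ T := Finset.mem_image_of_mem _ hv
    have hna : c₁ v ≠ a := fun h => haT' (h ▸ hvT)
    have hnb : c₁ v ≠ b := fun h => hbT' (h ▸ hvT)
    have : c₂ v = c₁ v := Equiv.swap_apply_of_ne_of_ne hna hnb
    rw [this]; exact hc₁ v hv
  have heq : c₂ = c₁ := huniq₁ c₂ hc₂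
  obtain ⟨v, hv⟩ := hsurj₁ a
  have h3 : σ (c₁ v) = c₁ v := DFunLike.congr_fun heq v
  rw [hv] at h3
  simp only [σ, Equiv.swap_apply_left] at h3
  exact hab h3.symm
end

section
/- Let G be a complete t-partite graph with t ≥ 3 (each of the t parts nonempty). Then sn(G) = t − 1. -/
open SimpleGraph

/-- A complete `t`-partite graph (with `t ≥ 3` nonempty parts, parts given by the fibers
of a surjection `p : V → Fin t`, two vertices adjacent iff they lie in different parts)
has Sudoku number `t - 1`. -/
theorem sudokuNumber_of_complete_multipartite {V : Type*} [Fintype V] (G : SimpleGraph V)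
    (t : ℕ) (ht : 3 ≤ t) (p : V → Fin t) (hp : Function.Surjective p)
    (hadj : ∀ u v, G.Adj u v ↔ p u ≠ p v) :
    sudokuNumber G = t - 1 := by
  classical
  -- a section of p
  obtain ⟨rep, hrep⟩ := hp.hasRightInverse
  have hrepinj : Function.Injective rep := fun i j h => by
    rw [← hrep i, ← hrep j, h]
  -- the canonical coloring
  have pvalid : ∀ {u v : V}, G.Adj u v → p u ≠ p v := fun h => (hadj _ _).1 h
  let c₀ : G.Coloring (Fin t) := Coloring.mk p pvalid
  -- structure of colorings with any number n of colors: n ≥ t, and the coloring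
  -- factors through p via an injective map
  have key : ∀ {n : ℕ} (c : G.Coloring (Fin n)),
      Function.Injective (fun i => c (rep i)) := by
    intro n c i j hij
    by_contra hne
    have hadj' : G.Adj (rep i) (rep j) := by
      rw [hadj]; rw [hrep i, hrep j]; exact hne
    exact c.valid hadj' hij
  have hfac : ∀ (c : G.Coloring (Fin t)) (v : V), c v = c (rep (p v)) := by
    intro c v
    have hsurj : Function.Surjective (fun i => c (rep i)) :=
      Finite.injective_iff_surjective.mp (key c)
    obtain ⟨j, hj⟩ := hsurj (c v)
    by_cases hjv : j = p v
    · rw [← hjv]; exact hj.symm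
    · exfalso
      have hadjv : G.Adj v (rep j) := by
        rw [hadj, hrep j]; exact fun h => hjv (h.symm)
      exact c.valid hadjv hj.symm
  -- chromatic number = t
  have hcol : G.Colorable t := ⟨c₀⟩
  have hchi : G.chromaticNumber = (t : ℕ∞) := by
    refine le_antisymm hcol.chromaticNumber_le ?_
    rw [hcol.chromaticNumber_eq_sInf]
    rw [Nat.cast_le]
    refine le_csInf ⟨t, hcol⟩ ?_
    rintro n ⟨c⟩
    simpa using Fintype.card_le_of_injective _ (key c)
  have hchit : G.chromaticNumber.toNat = t := by rw [hchi]; simp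
  -- Now compute the Sudoku number.
  rw [sudokuNumber]
  have hset : {n | ∃ (S : Finset V) (C₀ : V → Fin G.chromaticNumber.toNat),
      IsSudokuColoring G G.chromaticNumber.toNat S C₀ ∧ S.card = n} =
      {n | ∃ (S : Finset V) (C₀ : V → Fin t),
      IsSudokuColoring G t S C₀ ∧ S.card = n} := by
    rw [hchit]
  rw [hset]
  -- membership: the set of representatives of the first t-1 parts
  have hmem : (t - 1) ∈ {n | ∃ (S : Finset V) (C₀ : V → Fin t),
      IsSudokuColoring G t S C₀ ∧ S.card = n} := by
    refine ⟨(Finset.univ.filter (fun i : Fin t => (i : ℕ) < t - 1)).image rep, p, ?_, ?_⟩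
    · refine ⟨c₀, fun v _ => rfl, ?_⟩
      intro c hc
      have hfix : ∀ i : Fin t, (i : ℕ) < t - 1 → c (rep i) = i := by
        intro i hi
        have := hc (rep i) (Finset.mem_image_of_mem rep (by simp [hi]))
        rw [this, hrep]
      refine DFunLike.ext _ _ fun v => ?_
      show c v = p v
      rw [hfac c v]
      set j := p v with hj
      by_cases hjlt : (j : ℕ) < t - 1
      · rw [hfix j hjlt]
      · -- j is the last index; c (rep j) cannot equal c (rep i) for i < t-1
        have hjval : (j : ℕ) = t - 1 := le_antisymm (by omega) (by omega)
        by_contra hne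
        -- c (rep j) ≠ j, so (c (rep j) : ℕ) < t - 1
        have hlt : ((c (rep j) : Fin t) : ℕ) < t - 1 := by
          have : (c (rep j) : Fin t) ≠ j := hne
          have hb := (c (rep j)).isLt
          rcases Nat.lt_or_ge ((c (rep j) : Fin t) : ℕ) (t-1) with h | h
          · exact h
          · exfalso; apply this; apply Fin.ext; omega
        have := hfix (c (rep j)) hlt
        exact hne (key c this)
    · rw [Finset.card_image_of_injective _ hrepinj]
      have : (Finset.univ.filter (fun i : Fin t => (i : ℕ) < t - 1)) =
          Finset.univ.erase ⟨t - 1, by omega⟩ := by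
        ext i
        simp [Fin.ext_iff]
        omega
      rw [this, Finset.card_erase_of_mem (Finset.mem_univ _)]
      simp
  refine le_antisymm (Nat.sInf_le hmem) (le_csInf ⟨_, hmem⟩ ?_)
  rintro n ⟨S, C₀, ⟨c, hc, huniq⟩, rfl⟩
  by_contra hlt
  push_neg at hlt
  -- S.card < t - 1, so at least two parts are missed by p '' S
  have himg : (S.image p).card < t - 1 := lt_of_le_of_lt (Finset.card_image_le) hlt
  have hcompl : 2 ≤ ((S.image p)ᶜ : Finset (Fin t)).card := by
    have := Finset.card_compl (S.image p)
    simp only [Fintype.card_fin] at this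
    omega
  obtain ⟨i, hi, j, hj, hij⟩ := Finset.one_lt_card.mp (by omega : 1 < ((S.image p)ᶜ : Finset (Fin t)).card)
  -- swap the colors of parts i and j
  have hab : c (rep i) ≠ c (rep j) := fun h => hij (key c h)
  let σ := Equiv.swap (c (rep i)) (c (rep j))
  let c' : G.Coloring (Fin t) := Coloring.mk (fun v => σ (c v))
    (fun h => fun he => c.valid h (σ.injective he))
  have hc' : ∀ v ∈ (S : Set V), c' v = C₀ v := by
    intro v hv
    have hv' : v ∈ S := hv
    have hvi : p v ≠ i := fun h =>
      (Finset.mem_compl.mp hi) (h ▸ Finset.mem_image_of_mem p hv')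
    have hvj : p v ≠ j := fun h =>
      (Finset.mem_compl.mp hj) (h ▸ Finset.mem_image_of_mem p hv')
    have h1 : c v ≠ c (rep i) := by
      rw [hfac c v]; intro h; exact hvi (key c h)
    have h2 : c v ≠ c (rep j) := by
      rw [hfac c v]; intro h; exact hvj (key c h)
    show σ (c v) = C₀ v
    rw [Equiv.swap_apply_of_ne_of_ne h1 h2]
    exact hc v hv
  have : c' = c := huniq c' hc'
  have : c' (rep i) = c (rep i) := by rw [this]
  have hswap : c' (rep i) = c (rep j) := by
    show σ (c (rep i)) = c (rep j)
    exact Equiv.swap_apply_left _ _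
  exact hab (by rw [← this, hswap])
end

section
/- For every odd n ≥ 3, the cycle C_n satisfies sn(C_n) = (n+1)/2. -/
open SimpleGraph

/-!
If two adjacent vertices of a cycle are both left uncoloured, then, since each has only one
other neighbour, three colours always leave a second way to colour them. Hence every uncoloured
vertex `v` has `v + 1` coloured, and `v ↦ v + 1` injects the uncoloured vertices into the
coloured ones, so `n ≤ 2 |S|`. Conversely, on an odd cycle colour the even vertices
`0, 2, …, n - 1` alternately `0, 1, 0, …` and the last one `2`: each odd vertex then sees two
different colours, so its colour is forced.
-/

theorem fin_three_exists_pair_ne (p q a b : Fin 3) :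
    ∃ A B : Fin 3, A ≠ B ∧ A ≠ p ∧ B ≠ q ∧ (A ≠ a ∨ B ≠ b) := by
  revert p q a b; decide

theorem fin_three_eq_of_ne_of_ne {a b x y : Fin 3} (hab : a ≠ b) (hxa : x ≠ a) (hxb : x ≠ b)
    (hya : y ≠ a) (hyb : y ≠ b) : x = y := by
  revert a b x y; decide

theorem fin_three_neg_add_ne {a b : Fin 3} (hab : a ≠ b) : -(a + b) ≠ a ∧ -(a + b) ≠ b := by
  revert a b; decide

theorem card_le_two_mul_card_of_injective {α : Type*} [Fintype α] [DecidableEq α] {f : α → α}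
    (hf : f.Injective) {S : Finset α} (h : ∀ a ∉ S, f a ∈ S) : Fintype.card α ≤ 2 * S.card := by
  have hcompl : Sᶜ.card ≤ S.card :=
    Finset.card_le_card_of_injOn f (fun a ha => h a (Finset.mem_compl.mp ha)) hf.injOn
  have := S.card_add_card_compl
  omega

namespace SimpleGraph

variable {V : Type*} {G : SimpleGraph V}

/-- With three colours, whatever `u'` and `w'` carry, the edge `uw` admits at least two
colourings. -/
theorem Coloring.exists_ne_eqOn_compl_of_adj (c : G.Coloring (Fin 3)) {u w u' w' : V}
    (huw : G.Adj u w) (hu : ∀ x, G.Adj u x → x = w ∨ x = u')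
    (hw : ∀ x, G.Adj w x → x = u ∨ x = w') :
    ∃ c' : G.Coloring (Fin 3), c' ≠ c ∧ ∀ x, x ≠ u → x ≠ w → c' x = c x := by
  classical
  obtain ⟨A, B, hAB, hA, hB, hnew⟩ := fin_three_exists_pair_ne (c u') (c w') (c u) (c w)
  set d : V → Fin 3 := Function.update (Function.update c u A) w B with hd
  have hdu : d u = A := by simp [hd, huw.ne]
  have hdw : d w = B := by simp [hd]
  have hdx : ∀ x, x ≠ u → x ≠ w → d x = c x := by
    intro x hxu hxw
    simp [hd, hxu, hxw]
  have hat_u : ∀ y, G.Adj u y → d u ≠ d y := by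
    intro y hy
    rcases eq_or_ne y w with rfl | hyw
    · rwa [hdu, hdw]
    · rw [hdu, hdx y hy.ne.symm hyw, (hu y hy).resolve_left hyw]
      exact hA
  have hat_w : ∀ y, G.Adj w y → d w ≠ d y := by
    intro y hy
    rcases eq_or_ne y u with rfl | hyu
    · rw [hdw, hdu]
      exact hAB.symm
    · rw [hdw, hdx y hyu hy.ne.symm, (hw y hy).resolve_left hyu]
      exact hB
  refine ⟨Coloring.mk d fun {x y} hxy => ?_, fun h => ?_, hdx⟩
  · by_cases hxu : x = u
    · exact hxu ▸ hat_u y (hxu ▸ hxy)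
    by_cases hxw : x = w
    · exact hxw ▸ hat_w y (hxw ▸ hxy)
    by_cases hyu : y = u
    · exact (hyu ▸ hat_u x (hyu ▸ hxy.symm)).symm
    by_cases hyw : y = w
    · exact (hyw ▸ hat_w x (hyw ▸ hxy.symm)).symm
    rw [hdx x hxu hxw, hdx y hyu hyw]
    exact c.valid hxy
  · have hcd : d = c := congrArg DFunLike.coe h
    rcases hnew with hAu | hBw
    · exact hAu (hdu ▸ congrFun hcd u)
    · exact hBw (hdw ▸ congrFun hcd w)

theorem IsSudokuColoring.mem_or_mem_of_adj {S : Set V} {C₀ : V → Fin 3}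
    (hS : IsSudokuColoring G 3 S C₀) {u w u' w' : V} (huw : G.Adj u w)
    (hu : ∀ x, G.Adj u x → x = w ∨ x = u') (hw : ∀ x, G.Adj w x → x = u ∨ x = w') :
    u ∈ S ∨ w ∈ S := by
  obtain ⟨c, hc, huniq⟩ := hS
  by_contra! h
  obtain ⟨c', hne, hc'⟩ := c.exists_ne_eqOn_compl_of_adj huw hu hw
  refine hne (huniq c' fun x hx => ?_)
  rw [hc' x (ne_of_mem_of_not_mem hx h.1) (ne_of_mem_of_not_mem hx h.2)]
  exact hc x hx

/-- With three colours, a vertex seeing two different colours has no choice left. -/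
theorem isSudokuColoring_of_forall_notMem (c : G.Coloring (Fin 3)) {S : Set V}
    (h : ∀ v ∉ S, ∃ a ∈ S, ∃ b ∈ S, G.Adj v a ∧ G.Adj v b ∧ c a ≠ c b) :
    IsSudokuColoring G 3 S c := by
  refine ⟨c, fun _ _ => rfl, fun c' hc' => DFunLike.ext _ _ fun v => ?_⟩
  by_cases hv : v ∈ S
  · exact hc' v hv
  obtain ⟨a, ha, b, hb, hva, hvb, hab⟩ := h v hv
  refine fin_three_eq_of_ne_of_ne hab ?_ ?_ (c.valid hva) (c.valid hvb)
  · rw [← hc' a ha]; exact c'.valid hva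
  · rw [← hc' b hb]; exact c'.valid hvb

theorem sudokuNumber_eq_card [Fintype V] {k : ℕ} (hχ : G.chromaticNumber = k) {S : Finset V}
    {C₀ : V → Fin k} (hS : IsSudokuColoring G k S C₀)
    (hmin : ∀ (T : Finset V) (D : V → Fin k), IsSudokuColoring G k T D → S.card ≤ T.card) :
    sudokuNumber G = S.card := by
  have hk : G.chromaticNumber.toNat = k := by rw [hχ]; rfl
  unfold sudokuNumber
  rw [hk]
  refine le_antisymm (Nat.sInf_le ⟨S, C₀, hS, rfl⟩) (le_csInf ⟨_, S, C₀, hS, rfl⟩ ?_)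
  rintro _ ⟨T, D, hT, rfl⟩
  exact hmin T D hT

theorem cycleGraph_adj_iff {n : ℕ} {u v : Fin (n + 2)} :
    (cycleGraph (n + 2)).Adj u v ↔ v = u - 1 ∨ v = u + 1 := by
  rw [← mem_neighborSet, cycleGraph_neighborSet]
  rfl

theorem IsSudokuColoring.mem_or_add_one_mem_of_cycleGraph {n : ℕ} {S : Set (Fin (n + 2))}
    {C₀ : Fin (n + 2) → Fin 3} (hS : IsSudokuColoring (cycleGraph (n + 2)) 3 S C₀)
    (v : Fin (n + 2)) : v ∈ S ∨ v + 1 ∈ S :=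
  hS.mem_or_mem_of_adj (u' := v - 1) (w' := v + 1 + 1) (cycleGraph_adj_iff.mpr (Or.inr rfl))
    (fun x hx => (cycleGraph_adj_iff.mp hx).symm)
    (fun x hx => by simpa using cycleGraph_adj_iff.mp hx)

theorem IsSudokuColoring.le_two_mul_card_of_cycleGraph {n : ℕ} {S : Finset (Fin (n + 2))}
    {C₀ : Fin (n + 2) → Fin 3} (hS : IsSudokuColoring (cycleGraph (n + 2)) 3 S C₀) :
    n + 2 ≤ 2 * S.card := by
  simpa using card_le_two_mul_card_of_injective (add_left_injective 1)
    fun v hv => (hS.mem_or_add_one_mem_of_cycleGraph v).resolve_left hv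

/-- The colour of the `j`-th even vertex `2 * j` of `cycleGraph (2 * m + 3)`. -/
def evenColor (m j : ℕ) : Fin 3 := if j = m + 1 then 2 else ⟨j % 2, by omega⟩

/-- Odd vertices get the third colour `-(a + b)` besides the colours `a ≠ b` of their two even
neighbours. -/
def oddCycleColor (m i : ℕ) : Fin 3 :=
  if Even i then evenColor m (i / 2) else -(evenColor m (i / 2) + evenColor m (i / 2 + 1))

theorem evenColor_ne_succ {m j : ℕ} (hj : j ≤ m) : evenColor m j ≠ evenColor m (j + 1) := by
  unfold evenColor
  split_ifs <;> simp [Fin.ext_iff] <;> omega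

theorem oddCycleColor_two_mul (m j : ℕ) : oddCycleColor m (2 * j) = evenColor m j := by
  simp [oddCycleColor]

theorem oddCycleColor_two_mul_add_one (m j : ℕ) :
    oddCycleColor m (2 * j + 1) = -(evenColor m j + evenColor m (j + 1)) := by
  simp [oddCycleColor, Nat.add_div]

theorem oddCycleColor_ne_succ {m i : ℕ} (hi : i ≤ 2 * m + 1) :
    oddCycleColor m i ≠ oddCycleColor m (i + 1) := by
  obtain ⟨j, rfl | rfl⟩ := Nat.even_or_odd' i
  · rw [oddCycleColor_two_mul, oddCycleColor_two_mul_add_one]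
    exact (fin_three_neg_add_ne (evenColor_ne_succ (by omega))).1.symm
  · rw [show 2 * j + 1 + 1 = 2 * (j + 1) by ring, oddCycleColor_two_mul,
      oddCycleColor_two_mul_add_one]
    exact (fin_three_neg_add_ne (evenColor_ne_succ (by omega))).2

theorem oddCycleColor_ne_add_one {m : ℕ} (v : Fin (2 * m + 3)) :
    oddCycleColor m v ≠ oddCycleColor m ↑(v + 1) := by
  rw [Fin.val_add_one]
  split_ifs with h
  · rw [h, Fin.val_last, show 2 * m + 2 = 2 * (m + 1) by ring, ← Nat.mul_zero 2,
      oddCycleColor_two_mul, oddCycleColor_two_mul]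
    simp [evenColor]
  · exact oddCycleColor_ne_succ (Nat.lt_succ_iff.mp (Fin.val_lt_last h))

def oddCycleColoring (m : ℕ) : (cycleGraph (2 * m + 3)).Coloring (Fin 3) :=
  Coloring.mk (fun v => oddCycleColor m v) fun {u v} huv => by
    rcases cycleGraph_adj_iff.mp huv with rfl | rfl
    · have h := oddCycleColor_ne_add_one (u - 1)
      rw [sub_add_cancel] at h
      exact h.symm
    · exact oddCycleColor_ne_add_one u

theorem oddCycleColoring_apply (m : ℕ) (v : Fin (2 * m + 3)) :
    oddCycleColoring m v = oddCycleColor m v :=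
  rfl

def evenVertices (m : ℕ) : Finset (Fin (2 * m + 3)) :=
  Finset.univ.map
    { toFun := fun j : Fin (m + 2) => ⟨2 * j, by omega⟩
      inj' := fun i j h => Fin.ext (by simpa using h) }

theorem card_evenVertices (m : ℕ) : (evenVertices m).card = m + 2 := by
  simp [evenVertices]

theorem mem_evenVertices {m : ℕ} {v : Fin (2 * m + 3)} : v ∈ evenVertices m ↔ Even v.val := by
  simp only [evenVertices, Finset.mem_map, Finset.mem_univ, true_and]
  constructor
  · rintro ⟨j, rfl⟩
    exact even_two_mul (j : ℕ)
  · rintro ⟨j, hj⟩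
    exact ⟨⟨j, by omega⟩, Fin.ext (show 2 * j = v.val by omega)⟩

theorem isSudokuColoring_oddCycleColoring (m : ℕ) :
    IsSudokuColoring (cycleGraph (2 * m + 3)) 3 (evenVertices m) (oddCycleColoring m) := by
  refine isSudokuColoring_of_forall_notMem _ fun v hv => ?_
  obtain ⟨j, hj⟩ : ∃ j, v.val = 2 * j + 1 :=
    Nat.not_even_iff_odd.mp (mt mem_evenVertices.mpr hv)
  refine ⟨⟨2 * j, by omega⟩, mem_evenVertices.mpr (even_two_mul j),
    ⟨2 * (j + 1), by omega⟩, mem_evenVertices.mpr (even_two_mul _), ?_, ?_, ?_⟩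
  · exact pathGraph_le_cycleGraph (pathGraph_adj.mpr (Or.inr hj.symm))
  · exact pathGraph_le_cycleGraph (pathGraph_adj.mpr (Or.inl (by simp only; omega)))
  · simpa [oddCycleColoring_apply, oddCycleColor_two_mul] using
      evenColor_ne_succ (m := m) (j := j) (by omega)

end SimpleGraph

/-- For every odd `n ≥ 3`, the cycle `C_n` has Sudoku number `(n + 1) / 2`. -/
theorem sudokuNumber_cycle_odd (n : ℕ) (hn : 3 ≤ n) (ho : Odd n) :
    sudokuNumber (SimpleGraph.cycleGraph n) = (n + 1) / 2 := by
  obtain ⟨m, rfl⟩ : ∃ m, n = 2 * m + 3 := by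
    obtain ⟨k, rfl⟩ := ho
    exact ⟨k - 1, by omega⟩
  have hχ : (cycleGraph (2 * m + 3)).chromaticNumber = (3 : ℕ) :=
    chromaticNumber_cycleGraph_of_odd _ (by omega) ho
  rw [sudokuNumber_eq_card hχ (isSudokuColoring_oddCycleColoring m) fun T D hT => ?_,
    card_evenVertices]
  · omega
  · have := hT.le_two_mul_card_of_cycleGraph
    rw [card_evenVertices]
    omega
end

section
/- For every m ≥ 2, the friendship graph f_m satisfies sn(f_m) = m. -/
open SimpleGraph

/-- The friendship graph `f_m`: the one-point union of `m` triangles.  The vertex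
`none` is the common vertex; the vertices `some (i, a)` with `a : Fin 2` are the two
other vertices of the `i`-th triangle.  Two vertices are adjacent iff one of them is
the common vertex or they belong to the same triangle. -/
def friendshipGraph (m : ℕ) : SimpleGraph (Option (Fin m × Fin 2)) :=
  SimpleGraph.fromRel fun x y =>
    x = none ∨ y = none ∨ Option.map Prod.fst x = Option.map Prod.fst y

lemma friendship_adj {m : ℕ} (x y : Option (Fin m × Fin 2)) :
    (friendshipGraph m).Adj x y ↔
      x ≠ y ∧ (x = none ∨ y = none ∨ Option.map Prod.fst x = Option.map Prod.fst y) := by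
  simp only [friendshipGraph, SimpleGraph.fromRel_adj]
  constructor
  · rintro ⟨h, (h1 | h1 | h1) | (h1 | h1 | h1)⟩
    exacts [⟨h, Or.inl h1⟩, ⟨h, Or.inr (Or.inl h1)⟩, ⟨h, Or.inr (Or.inr h1)⟩,
      ⟨h, Or.inr (Or.inl h1)⟩, ⟨h, Or.inl h1⟩, ⟨h, Or.inr (Or.inr h1.symm)⟩]
  · rintro ⟨h, h1⟩
    exact ⟨h, Or.inl h1⟩

lemma adj_hub {m : ℕ} (p : Fin m × Fin 2) : (friendshipGraph m).Adj none (some p) := by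
  rw [friendship_adj]; simp

lemma adj_leaves {m : ℕ} (i : Fin m) {a b : Fin 2} (h : a ≠ b) :
    (friendshipGraph m).Adj (some (i, a)) (some (i, b)) := by
  rw [friendship_adj]
  refine ⟨by simp [h], Or.inr (Or.inr rfl)⟩

/-- The canonical 3-coloring of the friendship graph. -/
def cstar (m : ℕ) : Option (Fin m × Fin 2) → Fin 3
  | none => 0
  | some (i, a) => if ((i : ℕ) = 1 ↔ (a : ℕ) = 0) then 2 else 1

lemma cstar_valid {m : ℕ} ⦃x y : Option (Fin m × Fin 2)⦄
    (h : (friendshipGraph m).Adj x y) : cstar m x ≠ cstar m y := by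
  rw [friendship_adj] at h
  obtain ⟨hne, hrel⟩ := h
  match x, y with
  | none, none => exact absurd rfl hne
  | none, some (j, b) =>
    simp only [cstar]
    split <;> decide
  | some (i, a), none =>
    simp only [cstar]
    split <;> decide
  | some (i, a), some (j, b) =>
    have hij : i = j := by
      rcases hrel with h | h | h
      · exact absurd h (by simp)
      · exact absurd h (by simp)
      · simpa using h
    subst hij
    have hab : (a : ℕ) ≠ (b : ℕ) := by
      intro hh
      exact hne (by simp [Fin.ext_iff, hh])
    have ha2 := a.isLt
    have hb2 := b.isLt
    simp only [cstar]
    by_cases h1 : (i : ℕ) = 1 <;> by_cases ha : (a : ℕ) = 0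
    · have hb : ¬ ((b:ℕ) = 0) := by omega
      simp [h1, ha, hb]
    · have hb : (b:ℕ) = 0 := by omega
      simp [h1, ha, hb]
    · have hb : ¬ ((b:ℕ) = 0) := by omega
      simp [h1, ha, hb]
    · have hb : (b:ℕ) = 0 := by omega
      simp [h1, ha, hb]

lemma fin3_eq_of_ne {x u v w : Fin 3} (hu : x ≠ u) (hv : x ≠ v)
    (huvw : ∀ y : Fin 3, y = u ∨ y = v ∨ y = w) : x = w :=
  (((huvw x).resolve_left hu).resolve_left hv)

lemma coloring_unique {m : ℕ} (hm : 2 ≤ m) (c : (friendshipGraph m).Coloring (Fin 3))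
    (h : ∀ i : Fin m, c (some (i, 0)) = cstar m (some (i, 0))) :
    ∀ v, c v = cstar m v := by
  have h0m : 0 < m := by omega
  have h1m : 1 < m := by omega
  have hval0 : c (some (⟨0, h0m⟩, 0)) = 1 := by
    rw [h]; simp [cstar]
  have hval1 : c (some (⟨1, h1m⟩, 0)) = 2 := by
    rw [h]; simp [cstar]
  have hubne0 : c none ≠ c (some (⟨0, h0m⟩, 0)) := c.valid (adj_hub _)
  have hubne1 : c none ≠ c (some (⟨1, h1m⟩, 0)) := c.valid (adj_hub _)
  rw [hval0] at hubne0
  rw [hval1] at hubne1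
  have hub : c none = 0 := fin3_eq_of_ne hubne0 hubne1 (by decide)
  intro v
  match v with
  | none => exact hub.trans rfl
  | some (i, a) =>
    rcases Fin.exists_fin_two.mp ⟨a, rfl⟩ with rfl | rfl
    · exact h i
    · have hne0 : c (some (i, 1)) ≠ c none := (c.valid (adj_hub (i, 1))).symm
      have hne' : c (some (i, 1)) ≠ c (some (i, 0)) :=
        c.valid (adj_leaves i (by decide))
      rw [hub] at hne0
      rw [h i] at hne'
      by_cases h1 : (i : ℕ) = 1
      · simp only [cstar, h1] at hne' ⊢
        simp only [Fin.val_zero, Fin.val_one] at hne' ⊢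
        rw [if_pos (by simp)] at hne'
        rw [if_neg (by simp)]
        exact fin3_eq_of_ne hne0 hne' (by decide)
      · simp only [cstar] at hne' ⊢
        simp only [Fin.val_zero, Fin.val_one] at hne' ⊢
        rw [if_neg (by simp [h1])] at hne'
        rw [if_pos (by simp [h1])]
        exact fin3_eq_of_ne hne0 hne' (by decide)

/-- The canonical coloring as a `Coloring`. -/
def Cstar (m : ℕ) : (friendshipGraph m).Coloring (Fin 3) :=
  SimpleGraph.Coloring.mk (cstar m) (fun h => cstar_valid h)

lemma friendship_not_colorable_two {m : ℕ} (hm : 2 ≤ m) :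
    ¬ (friendshipGraph m).Colorable 2 := by
  rintro ⟨c⟩
  have h0m : 0 < m := by omega
  have h1 : c none ≠ c (some (⟨0, h0m⟩, 0)) := c.valid (adj_hub _)
  have h2 : c none ≠ c (some (⟨0, h0m⟩, 1)) := c.valid (adj_hub _)
  have h3 : c (some (⟨0, h0m⟩, 0)) ≠ c (some (⟨0, h0m⟩, 1)) :=
    c.valid (adj_leaves _ (by decide))
  have v1 := Fin.val_ne_of_ne h1
  have v2 := Fin.val_ne_of_ne h2
  have v3 := Fin.val_ne_of_ne h3
  have := (c none).isLt
  have := (c (some (⟨0, h0m⟩, 0))).isLt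
  have := (c (some (⟨0, h0m⟩, 1))).isLt
  omega

lemma friendship_chromaticNumber {m : ℕ} (hm : 2 ≤ m) :
    (friendshipGraph m).chromaticNumber = 3 := by
  refine le_antisymm ?_ ?_
  · exact (SimpleGraph.Colorable.chromaticNumber_le ⟨Cstar m⟩ : _ ≤ ((3:ℕ):ℕ∞))
  · by_contra hlt
    rw [not_le] at hlt
    have h2 : (friendshipGraph m).chromaticNumber ≤ 2 := by
      have : (friendshipGraph m).chromaticNumber < ((2:ℕ):ℕ∞) + 1 := by
        have he : ((2:ℕ):ℕ∞) + 1 = (3:ℕ∞) := by norm_num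
        rw [he]; exact hlt
      exact Order.le_of_lt_add_one this
    rw [show ((2:ℕ∞)) = ((2:ℕ):ℕ∞) by norm_num,
      SimpleGraph.chromaticNumber_le_iff_colorable] at h2
    exact friendship_not_colorable_two hm h2

lemma friendship_chromaticNumber_toNat {m : ℕ} (hm : 2 ≤ m) :
    (friendshipGraph m).chromaticNumber.toNat = 3 := by
  rw [friendship_chromaticNumber hm]
  rfl

lemma friendship_upper {m : ℕ} (hm : 2 ≤ m) :
    ∃ (S : Finset (Option (Fin m × Fin 2))) (C₀ : Option (Fin m × Fin 2) → Fin 3),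
      IsSudokuColoring (friendshipGraph m) 3 S C₀ ∧ S.card = m := by
  refine ⟨Finset.image (fun i : Fin m => (some (i, (0:Fin 2)))) Finset.univ, cstar m,
    ⟨Cstar m, fun v _ => rfl, ?_⟩, ?_⟩
  · intro c hc
    have h : ∀ i : Fin m, c (some (i, 0)) = cstar m (some (i, 0)) := by
      intro i
      exact hc _ (by simp)
    exact DFunLike.ext _ _ (coloring_unique hm c h)
  · rw [Finset.card_image_of_injective _ (fun i j hij => by simpa using hij)]
    simp

lemma friendship_lower {m : ℕ} (hm : 2 ≤ m) (S : Finset (Option (Fin m × Fin 2)))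
    (C₀ : Option (Fin m × Fin 2) → Fin 3)
    (hS : IsSudokuColoring (friendshipGraph m) 3 S C₀) : m ≤ S.card := by
  by_contra hlt
  rw [not_le] at hlt
  obtain ⟨c, hc, huniq⟩ := hS
  have h0m : 0 < m := by omega
  set f : Option (Fin m × Fin 2) → Fin m := fun v =>
    match v with
    | none => ⟨0, h0m⟩
    | some (j, _) => j with hf
  have himg : (S.image f).card < m := lt_of_le_of_lt Finset.card_image_le hlt
  have hnsub : ¬ (Finset.univ ⊆ S.image f) := by
    intro hsub
    have := Finset.card_le_card hsub
    simp only [Finset.card_univ, Fintype.card_fin] at this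
    omega
  obtain ⟨i, -, hi⟩ := Finset.not_subset.mp hnsub
  set g : Fin m × Fin 2 → Fin m × Fin 2 :=
    fun p => (p.1, if p.1 = i then p.2 + 1 else p.2) with hg
  have ginj : Function.Injective g := by
    rintro ⟨j, a⟩ ⟨k, b⟩ hjk
    simp only [hg, Prod.mk.injEq] at hjk
    obtain ⟨h1, h2⟩ := hjk
    subst h1
    by_cases hji : j = i
    · rw [if_pos hji, if_pos hji] at h2
      exact Prod.ext rfl (add_right_cancel h2)
    · rw [if_neg hji, if_neg hji] at h2
      exact Prod.ext rfl h2
  set σ : Option (Fin m × Fin 2) → Option (Fin m × Fin 2) := Option.map g with hσ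
  have σ_fst : ∀ v, Option.map Prod.fst (σ v) = Option.map Prod.fst v := by
    rintro (_ | ⟨j, a⟩) <;> rfl
  have σ_ne : ∀ {x y : Option (Fin m × Fin 2)}, x ≠ y → σ x ≠ σ y :=
    fun h => (Option.map_injective ginj).ne h
  have σ_adj : ∀ {x y}, (friendshipGraph m).Adj x y →
      (friendshipGraph m).Adj (σ x) (σ y) := by
    intro x y hxy
    rw [friendship_adj] at hxy ⊢
    obtain ⟨hne, hrel⟩ := hxy
    refine ⟨σ_ne hne, ?_⟩
    rcases hrel with h | h | h
    · subst h; exact Or.inl rfl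
    · subst h; exact Or.inr (Or.inl rfl)
    · exact Or.inr (Or.inr (by rw [σ_fst, σ_fst]; exact h))
  set c' : (friendshipGraph m).Coloring (Fin 3) :=
    SimpleGraph.Coloring.mk (fun v => c (σ v)) (fun h => c.valid (σ_adj h)) with hc'
  have hfix : ∀ v ∈ S, σ v = v := by
    rintro (_ | ⟨j, a⟩) hv
    · rfl
    · have hji : j ≠ i := by
        intro hji
        subst hji
        exact hi (Finset.mem_image.mpr ⟨some (j, a), hv, rfl⟩)
      simp [hσ, hg, hji]
  have hrestr : ∀ v ∈ (S : Set (Option (Fin m × Fin 2))), c' v = C₀ v := by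
    intro v hv
    have : c' v = c v := by
      show c (σ v) = c v
      rw [hfix v hv]
    rw [this]
    exact hc v hv
  have hceq : c' = c := huniq c' hrestr
  have heval : c (some (i, 1)) = c (some (i, 0)) := by
    have h1 := DFunLike.congr_fun hceq (some (i, (0:Fin 2)))
    have h2 : c' (some (i, (0:Fin 2))) = c (some (i, 1)) := by
      show c (σ (some (i, (0:Fin 2)))) = c (some (i, 1))
      have : σ (some (i, (0:Fin 2))) = some (i, 1) := by
        simp [hσ, hg]
      rw [this]
    rw [h2] at h1
    exact h1
  exact c.valid (adj_leaves i (show (1:Fin 2) ≠ 0 by decide)) heval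

/-- For every `m ≥ 2`, the friendship graph `f_m` has Sudoku number `m`. -/
theorem sudokuNumber_friendship (m : ℕ) (hm : 2 ≤ m) :
    sudokuNumber (friendshipGraph m) = m := by
  have hχ := friendship_chromaticNumber_toNat hm
  unfold sudokuNumber
  rw [hχ]
  have hmem : m ∈ {n | ∃ (S : Finset (Option (Fin m × Fin 2)))
      (C₀ : Option (Fin m × Fin 2) → Fin 3),
      IsSudokuColoring (friendshipGraph m) 3 S C₀ ∧ S.card = n} :=
    friendship_upper hm
  refine le_antisymm (Nat.sInf_le hmem) (le_csInf ⟨m, hmem⟩ ?_)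
  rintro n ⟨S, C₀, hSud, rfl⟩
  exact friendship_lower hm S C₀ hSud
end

section
/- For n ≥ 4 and m ≥ 2, the lollipop graph L(n,m) satisfies sn(L(n,m)) = n + m − 3. -/
open SimpleGraph

/-- The lollipop graph `L(n, m)`, obtained from the complete graph `K_n` and the path
`P_m` by identifying a vertex of `K_n` with an end vertex of the path.  The vertices
`0, …, n - 1` form the clique and the vertices `0, n, n + 1, …, n + m - 2` form the
path (so vertex `0` is the identified vertex); there are `n + m - 1` vertices in all. -/
def lollipop (n m : ℕ) : SimpleGraph (Fin (n + (m - 1))) :=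
  SimpleGraph.fromRel fun a b =>
    ((a : ℕ) < n ∧ (b : ℕ) < n) ∨
    ((a : ℕ) = 0 ∧ (b : ℕ) = n) ∨
    ((a : ℕ) + 1 = (b : ℕ) ∧ n ≤ (a : ℕ))

variable {n m : ℕ}

lemma lol_adj {a b : Fin (n + (m-1))} :
    (lollipop n m).Adj a b ↔ a ≠ b ∧
      ((((a : ℕ) < n ∧ (b : ℕ) < n) ∨ ((a : ℕ) = 0 ∧ (b : ℕ) = n) ∨
        ((a : ℕ) + 1 = (b : ℕ) ∧ n ≤ (a : ℕ))) ∨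
       (((b : ℕ) < n ∧ (a : ℕ) < n) ∨ ((b : ℕ) = 0 ∧ (a : ℕ) = n) ∨
        ((b : ℕ) + 1 = (a : ℕ) ∧ n ≤ (b : ℕ)))) := by
  rw [lollipop, SimpleGraph.fromRel_adj]

lemma lol_adj_clique {a b : Fin (n + (m-1))} (hab : a ≠ b) (ha : (a:ℕ) < n) (hb : (b:ℕ) < n) :
    (lollipop n m).Adj a b :=
  lol_adj.mpr ⟨hab, Or.inl (Or.inl ⟨ha, hb⟩)⟩

-- neighbors of a clique vertex other than 0 stay in the clique
lemma lol_nbr_clique {v u : Fin (n + (m-1))} (hv0 : 0 < (v:ℕ)) (hvn : (v:ℕ) < n)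
    (h : (lollipop n m).Adj v u) : (u:ℕ) < n := by
  rcases lol_adj.mp h with ⟨hne, h | h⟩ <;> omega

-- neighbors of a path vertex
lemma lol_nbr_path {v u : Fin (n + (m-1))} (hv : n ≤ (v:ℕ))
    (h : (lollipop n m).Adj v u) :
    ((u:ℕ) + 1 = (v:ℕ) ∧ n ≤ (u:ℕ)) ∨ (v:ℕ) + 1 = (u:ℕ) ∨ ((u:ℕ) = 0 ∧ (v:ℕ) = n) := by
  rcases lol_adj.mp h with ⟨hne, h | h⟩ <;> omega

/-- the base coloring -/
def baseC (n m : ℕ) (hn : 4 ≤ n) (v : Fin (n + (m-1))) : Fin n :=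
  if h : (v:ℕ) < n then ⟨v, h⟩
  else if ((v:ℕ) - n) % 2 = 0 then ⟨1, by omega⟩ else ⟨2, by omega⟩

lemma baseC_valid (hn : 4 ≤ n) {a b : Fin (n + (m-1))}
    (h : (lollipop n m).Adj a b) : baseC n m hn a ≠ baseC n m hn b := by
  have hab : (a:ℕ) ≠ (b:ℕ) := fun he => (lol_adj.mp h).1 (Fin.ext he)
  have key : ∀ x y : Fin (n + (m-1)), (x:ℕ) ≠ (y:ℕ) →
      (((x : ℕ) < n ∧ (y : ℕ) < n) ∨ ((x : ℕ) = 0 ∧ (y : ℕ) = n) ∨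
        ((x : ℕ) + 1 = (y : ℕ) ∧ n ≤ (x : ℕ))) →
      baseC n m hn x ≠ baseC n m hn y := by
    intro x y hxy hcase
    unfold baseC
    rcases hcase with ⟨h1, h2⟩ | ⟨h1, h2⟩ | ⟨h1, h2⟩
    · rw [dif_pos h1, dif_pos h2]
      simp only [ne_eq, Fin.mk.injEq]; exact hxy
    · rw [dif_pos (by omega : (x:ℕ) < n), dif_neg (by omega : ¬ (y:ℕ) < n)]
      rw [if_pos (by omega : ((y:ℕ) - n) % 2 = 0)]
      simp only [ne_eq, Fin.mk.injEq]
      omega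
    · rw [dif_neg (by omega : ¬ (x:ℕ) < n), dif_neg (by omega : ¬ (y:ℕ) < n)]
      have hy : (y:ℕ) - n = ((x:ℕ) - n) + 1 := by omega
      rw [hy]
      by_cases hp : ((x:ℕ) - n) % 2 = 0
      · rw [if_pos hp, if_neg (by omega)]
        simp [Fin.ext_iff]
      · rw [if_neg hp, if_pos (by omega)]
        simp [Fin.ext_iff]
  rcases lol_adj.mp h with ⟨hne, hc | hc⟩
  · exact key a b hab hc
  · exact (key b a (Ne.symm hab) hc).symm

lemma baseC_valid' (hn : 4 ≤ n) : ∀ {a b : Fin (n + (m-1))},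
    (lollipop n m).Adj a b → baseC n m hn a ≠ baseC n m hn b := fun h => baseC_valid hn h

def baseColoring (n m : ℕ) (hn : 4 ≤ n) : (lollipop n m).Coloring (Fin n) :=
  SimpleGraph.Coloring.mk (baseC n m hn) (baseC_valid hn)

lemma lol_chromatic (hn : 4 ≤ n) : (lollipop n m).chromaticNumber = n := by
  apply le_antisymm
  · exact SimpleGraph.Colorable.chromaticNumber_le ⟨baseColoring n m hn⟩
  · have hlt : ∀ i : Fin n, (i : ℕ) < n + (m-1) := fun i => by omega
    set s : Finset (Fin (n + (m-1))) :=
      Finset.image (fun i : Fin n => (⟨i, hlt i⟩ : Fin (n + (m-1)))) Finset.univ with hs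
    have hcard : s.card = n := by
      rw [hs, Finset.card_image_of_injective _ (fun i j hij => by
        simpa [Fin.ext_iff] using hij)]
      simp
    have hclique : (lollipop n m).IsClique (s : Set (Fin (n + (m-1)))) := by
      intro a ha b hb hab
      simp only [hs, Finset.coe_image, Set.mem_image] at ha hb
      obtain ⟨i, _, hi⟩ := ha
      obtain ⟨j, _, hj⟩ := hb
      exact lol_adj_clique hab (by rw [← hi]; exact i.isLt) (by rw [← hj]; exact j.isLt)
    have := hclique.card_le_chromaticNumber
    rw [hcard] at this
    exact this

lemma lol_chromatic_toNat (hn : 4 ≤ n) : (lollipop n m).chromaticNumber.toNat = n := by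
  rw [lol_chromatic hn]; simp



lemma baseC_clique (hn : 4 ≤ n) {v : Fin (n + (m-1))} (h : (v:ℕ) < n) :
    baseC n m hn v = ⟨v, h⟩ := dif_pos h

lemma baseC_n (hn : 4 ≤ n) {v : Fin (n + (m-1))} (h : (v:ℕ) = n) :
    baseC n m hn v = ⟨1, by omega⟩ := by
  unfold baseC
  rw [dif_neg (by omega), if_pos (by omega)]

lemma force (hn : 4 ≤ n) (hm : 2 ≤ m) (c : (lollipop n m).Coloring (Fin n))
    (hcS : ∀ v : Fin (n + (m-1)), 2 ≤ (v:ℕ) → c v = baseC n m hn v) :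
    ∀ v, c v = baseC n m hn v := by
  have hnlt : n < n + (m-1) := by omega
  have h0 : 0 < n + (m-1) := by omega
  have h1 : 1 < n + (m-1) := by omega
  have hclq : ∀ x : Fin n, 2 ≤ (x:ℕ) → c ⟨(x:ℕ), by omega⟩ = x := by
    intro x hx
    rw [hcS _ hx, baseC_clique hn (show (((⟨(x:ℕ), by omega⟩ : Fin (n + (m-1)))):ℕ) < n from x.isLt)]
  have hc0 : c ⟨0, h0⟩ = ⟨0, by omega⟩ := by
    have hx1 : ((c ⟨0, h0⟩ : Fin n) : ℕ) ≠ 1 := by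
      intro hh
      have hvn : c ⟨n, hnlt⟩ = ⟨1, by omega⟩ := by
        rw [hcS _ (show 2 ≤ n by omega)]
        exact baseC_n hn rfl
      have hadj : (lollipop n m).Adj ⟨0, h0⟩ ⟨n, hnlt⟩ :=
        lol_adj.mpr ⟨by simp [Fin.ext_iff]; omega, Or.inl (Or.inr (Or.inl ⟨rfl, rfl⟩))⟩
      exact c.valid hadj (by rw [hvn]; exact Fin.ext hh)
    have hx2 : ¬ 2 ≤ ((c ⟨0, h0⟩ : Fin n) : ℕ) := by
      intro hh
      have hu := hclq (c ⟨0, h0⟩) hh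
      have hadj : (lollipop n m).Adj ⟨0, h0⟩ ⟨((c ⟨0, h0⟩ : Fin n) : ℕ), by omega⟩ :=
        lol_adj_clique (by simp [Fin.ext_iff]; omega) (show (0:ℕ) < n by omega)
          ((c ⟨0, h0⟩).isLt)
      exact c.valid hadj hu.symm
    exact Fin.ext (show ((c ⟨0, h0⟩ : Fin n) : ℕ) = 0 by omega)
  have hc1 : c ⟨1, h1⟩ = ⟨1, by omega⟩ := by
    have hx0 : ((c ⟨1, h1⟩ : Fin n) : ℕ) ≠ 0 := by
      intro hh
      have hadj : (lollipop n m).Adj ⟨1, h1⟩ ⟨0, h0⟩ :=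
        lol_adj_clique (by simp [Fin.ext_iff]) (show (1:ℕ) < n by omega) (show (0:ℕ) < n by omega)
      exact c.valid hadj (by rw [hc0]; exact Fin.ext hh)
    have hx2 : ¬ 2 ≤ ((c ⟨1, h1⟩ : Fin n) : ℕ) := by
      intro hh
      have hu := hclq (c ⟨1, h1⟩) hh
      have hadj : (lollipop n m).Adj ⟨1, h1⟩ ⟨((c ⟨1, h1⟩ : Fin n) : ℕ), by omega⟩ :=
        lol_adj_clique (by simp [Fin.ext_iff]; omega) (show (1:ℕ) < n by omega)
          ((c ⟨1, h1⟩).isLt)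
      exact c.valid hadj hu.symm
    exact Fin.ext (show ((c ⟨1, h1⟩ : Fin n) : ℕ) = 1 by omega)
  intro v
  rcases Nat.lt_or_ge (v:ℕ) 2 with hv | hv
  · interval_cases h : (v:ℕ)
    · have : v = ⟨0, h0⟩ := Fin.ext h
      rw [this, hc0, baseC_clique hn (by simpa using by omega)]
    · have : v = ⟨1, h1⟩ := Fin.ext h
      rw [this, hc1, baseC_clique hn (by simpa using by omega)]
  · exact hcS v hv

lemma upper (hn : 4 ≤ n) (hm : 2 ≤ m) :
    ∃ (S : Finset (Fin (n + (m-1)))) (C₀ : Fin (n + (m-1)) → Fin n),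
      IsSudokuColoring (lollipop n m) n S C₀ ∧ S.card = n + m - 3 := by
  have h0 : 0 < n + (m-1) := by omega
  have h1 : 1 < n + (m-1) := by omega
  refine ⟨Finset.univ \ {⟨0, h0⟩, ⟨1, h1⟩}, baseC n m hn, ?_, ?_⟩
  · refine ⟨baseColoring n m hn, fun v _ => rfl, ?_⟩
    intro c hc
    have hcS : ∀ v : Fin (n + (m-1)), 2 ≤ (v:ℕ) → c v = baseC n m hn v := by
      intro v hv
      apply hc
      simp only [Finset.coe_sdiff, Finset.coe_univ, Set.mem_diff, Set.mem_univ, true_and,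
        Finset.coe_insert, Finset.coe_singleton, Set.mem_insert_iff, Set.mem_singleton_iff]
      push_neg
      constructor <;> (intro hh; rw [hh] at hv; simp at hv)
    exact DFunLike.ext _ _ (force hn hm c hcS)
  · rw [Finset.card_sdiff_of_subset (Finset.subset_univ _), Finset.card_pair (by simp [Fin.ext_iff])]
    simp only [Finset.card_univ, Fintype.card_fin]
    omega

lemma lower (hn : 4 ≤ n) (hm : 2 ≤ m) (S : Finset (Fin (n + (m-1))))
    (C₀ : Fin (n + (m-1)) → Fin n) (h : IsSudokuColoring (lollipop n m) n S C₀) :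
    n + m - 3 ≤ S.card := by
  obtain ⟨c, hcS, huniq⟩ := h
  by_contra hlt
  push_neg at hlt
  have hTcard : 3 ≤ (Finset.univ \ S).card := by
    rw [Finset.card_sdiff_of_subset (Finset.subset_univ _)]
    simp only [Finset.card_univ, Fintype.card_fin]
    have := Finset.card_le_card (Finset.subset_univ S)
    simp only [Finset.card_univ, Fintype.card_fin] at this
    omega
  have hTS : ∀ v ∈ Finset.univ \ S, v ∉ S := fun v hv => (Finset.mem_sdiff.mp hv).2
  by_cases hpath : ∃ v ∈ Finset.univ \ S, n ≤ (v:ℕ)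
  · -- a path vertex is uncolored: recolor it
    obtain ⟨v, hvT, hv⟩ := hpath
    have hex : ∃ p₁ p₂, ∀ u, (lollipop n m).Adj v u → u = p₁ ∨ u = p₂ := by
      by_cases hvn : (v:ℕ) = n
      · by_cases h2 : (v:ℕ) + 1 < n + (m-1)
        · exact ⟨⟨0, by omega⟩, ⟨(v:ℕ)+1, h2⟩, fun u hu => by
            rcases lol_nbr_path hv hu with ⟨a,b⟩ | a | ⟨a,b⟩
            · omega
            · exact Or.inr (Fin.ext (show (u:ℕ) = (v:ℕ)+1 by omega))
            · exact Or.inl (Fin.ext (show (u:ℕ) = 0 by omega))⟩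
        · exact ⟨⟨0, by omega⟩, v, fun u hu => by
            rcases lol_nbr_path hv hu with ⟨a,b⟩ | a | ⟨a,b⟩
            · omega
            · exact absurd u.isLt (by omega)
            · exact Or.inl (Fin.ext (show (u:ℕ) = 0 by omega))⟩
      · by_cases h2 : (v:ℕ) + 1 < n + (m-1)
        · exact ⟨⟨(v:ℕ)-1, by omega⟩, ⟨(v:ℕ)+1, h2⟩, fun u hu => by
            rcases lol_nbr_path hv hu with ⟨a,b⟩ | a | ⟨a,b⟩
            · exact Or.inl (Fin.ext (show (u:ℕ) = (v:ℕ)-1 by omega))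
            · exact Or.inr (Fin.ext (show (u:ℕ) = (v:ℕ)+1 by omega))
            · omega⟩
        · exact ⟨⟨(v:ℕ)-1, by omega⟩, v, fun u hu => by
            rcases lol_nbr_path hv hu with ⟨a,b⟩ | a | ⟨a,b⟩
            · exact Or.inl (Fin.ext (show (u:ℕ) = (v:ℕ)-1 by omega))
            · exact absurd u.isLt (by omega)
            · omega⟩
    obtain ⟨p₁, p₂, hnbr⟩ := hex
    have hxex : ∃ x : Fin n, x ∉ ({c p₁, c p₂, c v} : Finset (Fin n)) := by
      by_contra hall
      push_neg at hall
      have hsub : (Finset.univ : Finset (Fin n)) ⊆ {c p₁, c p₂, c v} := fun x _ => hall x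
      have hle := Finset.card_le_card hsub
      simp only [Finset.card_univ, Fintype.card_fin] at hle
      have h3 : ({c p₁, c p₂, c v} : Finset (Fin n)).card ≤ 3 :=
        le_trans (Finset.card_insert_le _ _) (by
          have := Finset.card_insert_le (c p₂) ({c v} : Finset (Fin n))
          simp only [Finset.card_singleton] at this ⊢
          omega)
      omega
    obtain ⟨x, hxmem⟩ := hxex
    simp only [Finset.mem_insert, Finset.mem_singleton, not_or] at hxmem
    obtain ⟨hx1, hx2, hx3⟩ := hxmem
    have hvalid : ∀ {a b}, (lollipop n m).Adj a b →
        (if a = v then x else c a) ≠ (if b = v then x else c b) := by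
      intro a b hab
      have hne : a ≠ b := (lol_adj.mp hab).1
      by_cases ha : a = v
      · rw [if_pos ha, if_neg (fun hb => hne (ha.trans hb.symm))]
        rcases hnbr b (ha ▸ hab) with rfl | rfl
        · exact hx1
        · exact hx2
      · rw [if_neg ha]
        by_cases hb : b = v
        · rw [if_pos hb]
          rcases hnbr a (hb ▸ hab.symm) with rfl | rfl
          · exact (Ne.symm hx1)
          · exact (Ne.symm hx2)
        · rw [if_neg hb]
          exact c.valid hab
    have hc'c : (SimpleGraph.Coloring.mk (fun u => if u = v then x else c u) hvalid) = c :=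
      huniq _ (fun u hu => by
        have huv : u ≠ v := fun h => hTS v hvT (h ▸ hu)
        show (if u = v then x else c u) = C₀ u
        rw [if_neg huv]
        exact hcS u hu)
    have hvv : (if v = v then x else c v) = c v := DFunLike.congr_fun hc'c v
    rw [if_pos rfl] at hvv
    exact hx3 hvv
  · -- all uncolored vertices are clique vertices: swap two nonzero ones
    push_neg at hpath
    have h0 : 0 < n + (m-1) := by omega
    have h2card : 2 ≤ ((Finset.univ \ S).erase ⟨0, h0⟩).card := by
      have hle : (Finset.univ \ S).card - 1 ≤
          ((Finset.univ \ S).erase (⟨0, h0⟩ : Fin (n + (m-1)))).card :=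
        Finset.pred_card_le_card_erase
      omega
    obtain ⟨v, hv, w, hw, hvw⟩ := Finset.one_lt_card.mp (lt_of_lt_of_le one_lt_two h2card)
    have hvT : v ∈ Finset.univ \ S := Finset.mem_of_mem_erase hv
    have hwT : w ∈ Finset.univ \ S := Finset.mem_of_mem_erase hw
    have hv0 : 0 < (v:ℕ) := by
      have := Finset.ne_of_mem_erase hv
      simp only [ne_eq, Fin.ext_iff] at this
      omega
    have hw0 : 0 < (w:ℕ) := by
      have := Finset.ne_of_mem_erase hw
      simp only [ne_eq, Fin.ext_iff] at this
      omega
    have hvn : (v:ℕ) < n := hpath v hvT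
    have hwn : (w:ℕ) < n := hpath w hwT
    have hadjvw : (lollipop n m).Adj v w := lol_adj_clique hvw hvn hwn
    have hvalid : ∀ {a b}, (lollipop n m).Adj a b →
        (if a = v then c w else if a = w then c v else c a) ≠
        (if b = v then c w else if b = w then c v else c b) := by
      intro a b hab
      have hne : a ≠ b := (lol_adj.mp hab).1
      by_cases ha : a = v
      · subst ha
        rw [if_pos rfl, if_neg (Ne.symm hne)]
        have hbn : (b:ℕ) < n := lol_nbr_clique hv0 hvn hab
        by_cases hb : b = w
        · rw [if_pos hb]
          exact (c.valid hadjvw).symm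
        · rw [if_neg hb]
          exact (c.valid (lol_adj_clique (fun h => hb h.symm) hwn hbn).symm).symm
      · rw [if_neg ha]
        by_cases ha' : a = w
        · subst ha'
          rw [if_pos rfl]
          have hbn : (b:ℕ) < n := lol_nbr_clique hw0 hwn hab
          by_cases hb : b = v
          · rw [if_pos hb]
            exact c.valid hadjvw
          · rw [if_neg hb, if_neg (Ne.symm hne)]
            exact (c.valid (lol_adj_clique (fun h => hb h.symm) hvn hbn).symm).symm
        · rw [if_neg ha']
          by_cases hb : b = v
          · subst hb
            rw [if_pos rfl]
            have han : (a:ℕ) < n := lol_nbr_clique hv0 hvn hab.symm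
            exact c.valid (lol_adj_clique ha' han hwn)
          · rw [if_neg hb]
            by_cases hb' : b = w
            · subst hb'
              rw [if_pos rfl]
              have han : (a:ℕ) < n := lol_nbr_clique hw0 hwn hab.symm
              exact c.valid (lol_adj_clique ha han hvn)
            · rw [if_neg hb']
              exact c.valid hab
    have hc'c : (SimpleGraph.Coloring.mk
        (fun u => if u = v then c w else if u = w then c v else c u) hvalid) = c :=
      huniq _ (fun u hu => by
        have huv : u ≠ v := fun h => hTS v hvT (h ▸ hu)
        have huw : u ≠ w := fun h => hTS w hwT (h ▸ hu)
        show (if u = v then c w else if u = w then c v else c u) = C₀ u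
        rw [if_neg huv, if_neg huw]
        exact hcS u hu)
    have hvv : (if v = v then c w else if v = w then c v else c v) = c v :=
      DFunLike.congr_fun hc'c v
    rw [if_pos rfl] at hvv
    exact (c.valid hadjvw).symm hvv

/-- For `n ≥ 4` and `m ≥ 2`, the lollipop graph `L(n, m)` has Sudoku number
`n + m - 3`. -/
theorem sudokuNumber_lollipop (n m : ℕ) (hn : 4 ≤ n) (hm : 2 ≤ m) :
    sudokuNumber (lollipop n m) = n + m - 3 := by
  have ht := lol_chromatic_toNat (m := m) hn
  unfold sudokuNumber
  rw [show (lollipop n m).chromaticNumber.toNat = n from ht]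
  obtain ⟨S, C₀, hS, hcard⟩ := upper hn hm
  have hmem : (n + m - 3) ∈ {N | ∃ (S : Finset (Fin (n + (m-1))))
      (C₀ : Fin (n + (m-1)) → Fin n),
      IsSudokuColoring (lollipop n m) n ↑S C₀ ∧ S.card = N} := ⟨S, C₀, hS, hcard⟩
  apply le_antisymm
  · exact Nat.sInf_le hmem
  · apply le_csInf ⟨n + m - 3, hmem⟩
    rintro N ⟨S', C₀', hS', rfl⟩
    exact lower hn hm S' C₀' hS'
end

section
/- For n ≥ 2 and m ≥ 3, the graph C_{2n}(K_m) satisfies sn(C_{2n}(K_m)) = n(m − 2). -/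
open SimpleGraph

/-- The graph `C_{2n}(K_m)`, obtained from the cycle `C_{2n} = x_1 x_2 ⋯ x_{2n} x_1` by
identifying each alternate edge `x_{2i-1} x_{2i}` with an edge of a distinct copy of
`K_m`.  The vertex `(i, a)` is the `a`-th vertex of the `i`-th copy `K^i` of `K_m`,
with `x_{2i-1} = (i, 0)` and `x_{2i} = (i, 1)`; two vertices are adjacent iff they lie
in the same copy, or they are `x_{2i}` and `x_{2i+1}` (indices mod `2n`). -/
def cycleK (n m : ℕ) : SimpleGraph (Fin n × Fin m) :=
  SimpleGraph.fromRel fun x y =>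
    x.1 = y.1 ∨
    ((y.1 : ℕ) = ((x.1 : ℕ) + 1) % n ∧ (x.2 : ℕ) = 1 ∧ (y.2 : ℕ) = 0)

lemma cycleK_adj {n m : ℕ} {x y : Fin n × Fin m} :
    (cycleK n m).Adj x y ↔ x ≠ y ∧
      (x.1 = y.1 ∨
       ((y.1 : ℕ) = ((x.1 : ℕ) + 1) % n ∧ (x.2 : ℕ) = 1 ∧ (y.2 : ℕ) = 0) ∨
       ((x.1 : ℕ) = ((y.1 : ℕ) + 1) % n ∧ (y.2 : ℕ) = 1 ∧ (x.2 : ℕ) = 0)) := by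
  simp only [cycleK, fromRel_adj]
  tauto

lemma cycleK_adj_copy {n m : ℕ} {i : Fin n} {a b : Fin m} (h : a ≠ b) :
    (cycleK n m).Adj (i, a) (i, b) := by
  rw [cycleK_adj]
  exact ⟨by simp [h], Or.inl rfl⟩

/-- A proper 3-coloring of the cycle `C_n` (at the level of ℕ). -/
def skT (n i : ℕ) : ℕ := if i + 1 = n ∧ n % 2 = 1 then 2 else i % 2

lemma skT_lt (n i : ℕ) : skT n i < 3 := by unfold skT; split <;> omega

lemma skT_ne {n : ℕ} (hn : 2 ≤ n) {i : ℕ} (hi : i < n) :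
    skT n ((i + 1) % n) ≠ skT n i := by
  rcases eq_or_lt_of_le (Nat.succ_le_of_lt hi) with h | h
  · rw [show i + 1 = n from h, Nat.mod_self]
    unfold skT
    split <;> split <;> omega
  · rw [Nat.mod_eq_of_lt h]
    unfold skT
    split <;> split <;> omega

/-- The "third color" in copy `i`. -/
def skS (n i : ℕ) : ℕ := 3 - skT n i - skT n ((i + 1) % n)

lemma skS_spec {n : ℕ} (hn : 2 ≤ n) {i : ℕ} (hi : i < n) :
    skS n i < 3 ∧ skS n i ≠ skT n i ∧ skS n i ≠ skT n ((i + 1) % n) := by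
  have h1 := skT_lt n i
  have h2 := skT_lt n ((i + 1) % n)
  have h3 := skT_ne hn hi
  unfold skS
  omega

/-- The canonical coloring of `cycleK n m`, as a ℕ-valued function. -/
def skC (n : ℕ) {m : ℕ} (x : Fin n × Fin m) : ℕ :=
  if (x.2 : ℕ) = 0 then skT n x.1
  else if (x.2 : ℕ) = 1 then skS n x.1
  else if (x.2 : ℕ) = 2 then skT n (((x.1 : ℕ) + 1) % n)
  else (x.2 : ℕ)

lemma skC_lt {n m : ℕ} (hn : 2 ≤ n) (hm : 3 ≤ m) (x : Fin n × Fin m) : skC n x < m := by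
  have h0 := skT_lt n (x.1 : ℕ)
  have h2 := skT_lt n (((x.1 : ℕ) + 1) % n)
  have h3 := (skS_spec hn x.1.isLt).1
  have h4 := x.2.isLt
  unfold skC
  split_ifs <;> omega

lemma skC_valid {n m : ℕ} (hn : 2 ≤ n) {x y : Fin n × Fin m}
    (h : (cycleK n m).Adj x y) : skC n x ≠ skC n y := by
  rw [cycleK_adj] at h
  obtain ⟨hne, hcase⟩ := h
  rcases hcase with h1 | h2 | h3
  · -- same copy
    have hab : (x.2 : ℕ) ≠ (y.2 : ℕ) := fun hc => hne (Prod.ext h1 (Fin.ext hc))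
    obtain ⟨hs1, hs2, hs3⟩ := skS_spec hn x.1.isLt
    have ht := skT_ne hn x.1.isLt
    have ht0 := skT_lt n (x.1 : ℕ)
    have ht2 := skT_lt n (((x.1 : ℕ) + 1) % n)
    unfold skC
    rw [← h1]
    split_ifs <;> omega
  · -- x.2 = 1, y.2 = 0, y.1 = succ x.1
    obtain ⟨hi, hx2, hy2⟩ := h2
    obtain ⟨hs1, hs2, hs3⟩ := skS_spec hn x.1.isLt
    unfold skC
    rw [hx2, hy2, hi]
    simpa using hs3
  · obtain ⟨hi, hy2, hx2⟩ := h3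
    obtain ⟨hs1, hs2, hs3⟩ := skS_spec hn y.1.isLt
    unfold skC
    rw [hx2, hy2, hi]
    simpa using hs3.symm

/-- The canonical coloring as a `Coloring`. -/
def skColoring (n m : ℕ) (hn : 2 ≤ n) (hm : 3 ≤ m) : (cycleK n m).Coloring (Fin m) :=
  SimpleGraph.Coloring.mk (fun x => ⟨skC n x, skC_lt hn hm x⟩)
    (fun h => by simpa [Fin.ext_iff] using skC_valid hn h)

lemma cycleK_chromaticNumber {n m : ℕ} (hn : 2 ≤ n) (hm : 3 ≤ m) :
    (cycleK n m).chromaticNumber = m := by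
  have hnpos : 0 < n := by omega
  refine le_antisymm ((skColoring n m hn hm).colorable.mono (by simp)).chromaticNumber_le ?_
  have hclique : (cycleK n m).IsClique
      ((Finset.univ.image fun a : Fin m => ((⟨0, hnpos⟩ : Fin n), a)) : Finset (Fin n × Fin m)) := by
    intro u hu v hv huv
    simp only [Finset.coe_image, Finset.coe_univ, Set.image_univ, Set.mem_range] at hu hv
    obtain ⟨a, rfl⟩ := hu
    obtain ⟨b, rfl⟩ := hv
    exact cycleK_adj_copy (fun h => huv (by rw [h]))
  have := hclique.card_le_chromaticNumber
  rwa [Finset.card_image_of_injective _ (fun a b h => (Prod.mk.injEq _ _ _ _ ▸ h).2),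
    Finset.card_univ, Fintype.card_fin] at this

def skSet (n m : ℕ) : Finset (Fin n × Fin m) :=
  Finset.univ.filter fun x => (x.2 : ℕ) = 0 ∨ 3 ≤ (x.2 : ℕ)

lemma skSet_card {n m : ℕ} (hm : 3 ≤ m) : (skSet n m).card = n * (m - 2) := by
  have hprod : skSet n m =
      Finset.univ ×ˢ (Finset.univ.filter fun a : Fin m => (a : ℕ) = 0 ∨ 3 ≤ (a : ℕ)) := by
    ext x
    simp [skSet, Finset.mem_product]
  have hA : (Finset.univ.filter fun a : Fin m => ¬((a : ℕ) = 0 ∨ 3 ≤ (a : ℕ))) =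
      {(⟨1, by omega⟩ : Fin m), ⟨2, by omega⟩} := by
    ext a
    simp only [Finset.mem_filter, Finset.mem_univ, true_and, Finset.mem_insert,
      Finset.mem_singleton, Fin.ext_iff]
    omega
  have hcard := Finset.card_filter_add_card_filter_not
    (s := (Finset.univ : Finset (Fin m))) (p := fun a => (a : ℕ) = 0 ∨ 3 ≤ (a : ℕ))
  rw [hA] at hcard
  have h2 : ({(⟨1, by omega⟩ : Fin m), ⟨2, by omega⟩} : Finset (Fin m)).card = 2 := by
    rw [Finset.card_insert_of_notMem (by simp [Fin.ext_iff]), Finset.card_singleton]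
  rw [hprod, Finset.card_product, Finset.card_univ, Fintype.card_fin]
  rw [h2, Finset.card_univ, Fintype.card_fin] at hcard
  have : (Finset.univ.filter fun a : Fin m => (a : ℕ) = 0 ∨ 3 ≤ (a : ℕ)).card = m - 2 := by
    omega
  rw [this]

lemma cycleK_adj_cross {n m : ℕ} (hn : 2 ≤ n) (i : Fin n) (a b : Fin m)
    (ha : (a : ℕ) = 1) (hb : (b : ℕ) = 0) :
    (cycleK n m).Adj (i, a) (⟨((i : ℕ) + 1) % n, Nat.mod_lt _ (by omega)⟩, b) := by
  rw [cycleK_adj]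
  constructor
  · intro h
    have := congrArg (fun z => (z.2 : ℕ)) h
    simp [ha, hb] at this
  · exact Or.inr (Or.inl ⟨rfl, ha, hb⟩)

lemma sk_isSudoku {n m : ℕ} (hn : 2 ≤ n) (hm : 3 ≤ m) :
    IsSudokuColoring (cycleK n m) m (skSet n m)
      (fun x => ⟨skC n x, skC_lt hn hm x⟩) := by
  refine ⟨skColoring n m hn hm, fun v _ => rfl, ?_⟩
  intro c hc
  have hS : ∀ (i : Fin n) (a : Fin m), ((a : ℕ) = 0 ∨ 3 ≤ (a : ℕ)) →
      ((c (i, a)) : ℕ) = skC n (i, a) := by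
    intro i a ha
    have := hc (i, a) (by simp [skSet, ha])
    rw [this]
  -- value of c on (i, 0)
  have h0 : ∀ i : Fin n, ((c (i, ⟨0, by omega⟩)) : ℕ) = skT n i := by
    intro i
    have := hS i ⟨0, by omega⟩ (Or.inl rfl)
    rwa [show skC n (i, (⟨0, by omega⟩ : Fin m)) = skT n i by simp [skC]] at this
  have h3 : ∀ (i : Fin n) (a : Fin m), 3 ≤ (a : ℕ) → ((c (i, a)) : ℕ) = (a : ℕ) := by
    intro i a ha
    have := hS i a (Or.inr ha)
    rwa [show skC n (i, a) = (a : ℕ) by simp only [skC]; split_ifs <;> omega] at this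
  -- any vertex's color is < 3 if its own index is < 3
  have hlt3 : ∀ (i : Fin n) (a : Fin m), (a : ℕ) < 3 → ((c (i, a)) : ℕ) < 3 := by
    intro i a ha
    by_contra hge
    push_neg at hge
    have hvlt := (c (i, a)).isLt
    set b : Fin m := ⟨(c (i, a) : ℕ), hvlt⟩ with hb
    have hab : a ≠ b := by
      intro h
      rw [h] at ha
      simp [hb] at ha
      omega
    have := c.valid (cycleK_adj_copy (i := i) hab)
    apply this
    have := h3 i b (by simp [hb]; omega)
    exact Fin.ext (by rw [this])
  -- value on (i, 1)
  have h1 : ∀ i : Fin n, ((c (i, ⟨1, by omega⟩)) : ℕ) = skS n i := by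
    intro i
    have hv3 := hlt3 i ⟨1, by omega⟩ (by simp)
    have hvt : ((c (i, ⟨1, by omega⟩)) : ℕ) ≠ skT n i := by
      have hadj := c.valid (cycleK_adj_copy (i := i)
        (a := ⟨1, by omega⟩) (b := ⟨0, by omega⟩) (by simp [Fin.ext_iff]))
      exact fun h => hadj (Fin.ext (h.trans (h0 i).symm))
    have hvs : ((c (i, ⟨1, by omega⟩)) : ℕ) ≠ skT n (((i : ℕ) + 1) % n) := by
      have hadj := c.valid (cycleK_adj_cross hn i ⟨1, by omega⟩ ⟨0, by omega⟩ rfl rfl)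
      exact fun h => hadj (Fin.ext
        (h.trans (h0 ⟨((i : ℕ) + 1) % n, Nat.mod_lt _ (by omega)⟩).symm))
    obtain ⟨hs1, hs2, hs3⟩ := skS_spec hn i.isLt
    have ht0 := skT_lt n (i : ℕ)
    have ht2 := skT_lt n (((i : ℕ) + 1) % n)
    have ht := skT_ne hn i.isLt
    unfold skS at *
    omega
  -- value on (i, 2)
  have h2 : ∀ i : Fin n, ((c (i, ⟨2, by omega⟩)) : ℕ) = skT n (((i : ℕ) + 1) % n) := by
    intro i
    have hv3 := hlt3 i ⟨2, by omega⟩ (by simp)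
    have hvt : ((c (i, ⟨2, by omega⟩)) : ℕ) ≠ skT n i := by
      have hadj := c.valid (cycleK_adj_copy (i := i)
        (a := ⟨2, by omega⟩) (b := ⟨0, by omega⟩) (by simp [Fin.ext_iff]))
      exact fun h => hadj (Fin.ext (h.trans (h0 i).symm))
    have hvs : ((c (i, ⟨2, by omega⟩)) : ℕ) ≠ skS n i := by
      have hadj := c.valid (cycleK_adj_copy (i := i)
        (a := ⟨2, by omega⟩) (b := ⟨1, by omega⟩) (by simp [Fin.ext_iff]))
      exact fun h => hadj (Fin.ext (h.trans (h1 i).symm))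
    obtain ⟨hs1, hs2, hs3⟩ := skS_spec hn i.isLt
    have ht0 := skT_lt n (i : ℕ)
    have ht2 := skT_lt n (((i : ℕ) + 1) % n)
    have ht := skT_ne hn i.isLt
    unfold skS at *
    omega
  -- conclude
  apply DFunLike.ext
  rintro ⟨i, a⟩
  show c (i, a) = (⟨skC n (i, a), _⟩ : Fin m)
  rw [Fin.ext_iff]
  rcases Nat.lt_or_ge (a : ℕ) 3 with hlt | hge
  · interval_cases h : (a : ℕ)
    · rw [show a = (⟨0, by omega⟩ : Fin m) from Fin.ext h]
      rw [h0 i]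
      simp [skC]
    · rw [show a = (⟨1, by omega⟩ : Fin m) from Fin.ext h]
      rw [h1 i]
      simp [skC]
    · rw [show a = (⟨2, by omega⟩ : Fin m) from Fin.ext h]
      rw [h2 i]
      simp [skC]
  · rw [h3 i a hge]
    simp only [skC]
    split_ifs <;> omega

lemma cycleK_adj_of_eq_fst {n m : ℕ} {p q : Fin n × Fin m} (h1 : p.1 = q.1) (hne : p ≠ q) :
    (cycleK n m).Adj p q := by
  rw [cycleK_adj]
  exact ⟨hne, Or.inl h1⟩

/-- vertices with second coordinate ≥ 2 have no neighbors outside their copy -/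
lemma cycleK_no_ext {n m : ℕ} {i : Fin n} {a : Fin m} {y : Fin n × Fin m}
    (ha : 2 ≤ (a : ℕ)) (hadj : (cycleK n m).Adj (i, a) y) : y.1 = i := by
  rw [cycleK_adj] at hadj
  obtain ⟨-, h⟩ := hadj
  dsimp only at h
  rcases h with h1 | h2 | h3
  · exact h1.symm
  · omega
  · omega

lemma nat_pred_eq {n j i : ℕ} (hn : 0 < n) (hj : j < n) (hi : i < n)
    (h : (j + 1) % n = i) : j = (i + n - 1) % n := by
  rcases eq_or_lt_of_le (Nat.succ_le_of_lt hj) with he | hl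
  · rw [show j + 1 = n from he, Nat.mod_self] at h
    subst h
    rw [Nat.mod_eq_of_lt (by omega)]
    omega
  · rw [Nat.mod_eq_of_lt hl] at h
    subst h
    rw [show j + 1 + n - 1 = j + n by omega, Nat.add_mod_right, Nat.mod_eq_of_lt hj]

/-- the unique external neighbor of `(i, 0)` is `(i - 1, 1)` -/
lemma cycleK_ext_snd0 {n m : ℕ} (hn : 2 ≤ n) (hm : 3 ≤ m) {i : Fin n} {a : Fin m}
    (ha : (a : ℕ) = 0) {y : Fin n × Fin m} (hadj : (cycleK n m).Adj (i, a) y)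
    (hy : y.1 ≠ i) :
    y = (⟨((i : ℕ) + n - 1) % n, Nat.mod_lt _ (by omega)⟩, ⟨1, by omega⟩) := by
  rw [cycleK_adj] at hadj
  obtain ⟨-, h⟩ := hadj
  dsimp only at h
  rcases h with h1 | h2 | h3
  · exact absurd h1.symm hy
  · omega
  · obtain ⟨hii, hy2, _⟩ := h3
    have := nat_pred_eq (by omega : 0 < n) y.1.isLt i.isLt hii.symm
    exact Prod.ext (Fin.ext this) (Fin.ext hy2)

/-- the unique external neighbor of `(i, 1)` is `(i + 1, 0)` -/
lemma cycleK_ext_snd1 {n m : ℕ} (hn : 2 ≤ n) (hm : 3 ≤ m) {i : Fin n} {a : Fin m}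
    (ha : (a : ℕ) = 1) {y : Fin n × Fin m} (hadj : (cycleK n m).Adj (i, a) y)
    (hy : y.1 ≠ i) :
    y = (⟨((i : ℕ) + 1) % n, Nat.mod_lt _ (by omega)⟩, ⟨0, by omega⟩) := by
  rw [cycleK_adj] at hadj
  obtain ⟨-, h⟩ := hadj
  dsimp only at h
  rcases h with h1 | h2 | h3
  · exact absurd h1.symm hy
  · exact Prod.ext (Fin.ext h2.1) (Fin.ext h2.2.2)
  · omega

/-- swapping the colors of two non-adjacent-constraint-violating vertices in the same copy -/
lemma swap_contra {n m : ℕ} (hn : 2 ≤ n) {S : Finset (Fin n × Fin m)}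
    {C₀ : Fin n × Fin m → Fin m} (c : (cycleK n m).Coloring (Fin m))
    (hcS : ∀ v ∈ (S : Set (Fin n × Fin m)), c v = C₀ v)
    (huniq : ∀ c' : (cycleK n m).Coloring (Fin m),
      (∀ v ∈ (S : Set (Fin n × Fin m)), c' v = C₀ v) → c' = c)
    (u w : Fin n × Fin m) (hco : u.1 = w.1) (hne : u ≠ w)
    (huS : u ∉ S) (hwS : w ∉ S)
    (hu : ∀ y, (cycleK n m).Adj u y → y.1 ≠ u.1 → c w ≠ c y)
    (hw : ∀ y, (cycleK n m).Adj w y → y.1 ≠ w.1 → c u ≠ c y) : False := by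
  have hadjuw : (cycleK n m).Adj u w := cycleK_adj_of_eq_fst hco hne
  have key : ∀ p q : Fin n × Fin m, p.1 = q.1 → p ≠ q → c p ≠ c q :=
    fun p q h1 h2 => c.valid (cycleK_adj_of_eq_fst h1 h2)
  have hvalid : ∀ {x y : Fin n × Fin m}, (cycleK n m).Adj x y →
      (fun z => if z = u then c w else if z = w then c u else c z) x ≠
      (fun z => if z = u then c w else if z = w then c u else c z) y := by
    intro x y hadj
    have hxy : x ≠ y := hadj.ne
    simp only
    by_cases hxu : x = u
    · rw [if_pos hxu]
      by_cases hyu : y = u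
      · exact absurd (hxu.trans hyu.symm) hxy
      · rw [if_neg hyu]
        by_cases hyw : y = w
        · rw [if_pos hyw]
          exact key w u hco.symm (Ne.symm hne)
        · rw [if_neg hyw]
          by_cases h1 : y.1 = u.1
          · exact key w y (hco.symm.trans h1.symm) (Ne.symm hyw)
          · exact hu y (by rw [← hxu]; exact hadj) h1
    · rw [if_neg hxu]
      by_cases hxw : x = w
      · rw [if_pos hxw]
        by_cases hyu : y = u
        · rw [if_pos hyu]
          exact key u w hco hne
        · rw [if_neg hyu]
          by_cases hyw : y = w
          · exact absurd (hxw.trans hyw.symm) hxy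
          · rw [if_neg hyw]
            by_cases h1 : y.1 = w.1
            · exact key u y (hco.trans h1.symm) (Ne.symm hyu)
            · exact hw y (by rw [← hxw]; exact hadj) h1
      · rw [if_neg hxw]
        by_cases hyu : y = u
        · rw [if_pos hyu]
          by_cases h1 : x.1 = w.1
          · exact key x w h1 hxw
          · refine Ne.symm (hu x (by rw [← hyu]; exact hadj.symm) ?_)
            exact fun hh => h1 (hh.trans hco)
        · rw [if_neg hyu]
          by_cases hyw : y = w
          · rw [if_pos hyw]
            by_cases h1 : x.1 = u.1
            · exact key x u h1 hxu
            · refine Ne.symm (hw x (by rw [← hyw]; exact hadj.symm) ?_)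
              exact fun hh => h1 (hh.trans hco.symm)
          · rw [if_neg hyw]
            exact c.valid hadj
  let c' : (cycleK n m).Coloring (Fin m) :=
    SimpleGraph.Coloring.mk _ fun {x y} h => hvalid h
  have hc' : ∀ v ∈ (S : Set (Fin n × Fin m)), c' v = C₀ v := by
    intro v hv
    have h1 : v ≠ u := fun h => huS (h ▸ hv)
    have h2 : v ≠ w := fun h => hwS (h ▸ hv)
    have : c' v = c v := by
      show (if v = u then c w else if v = w then c u else c v) = c v
      rw [if_neg h1, if_neg h2]
    rw [this]
    exact hcS v hv
  have heq := huniq c' hc'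
  have : c' u = c u := by rw [heq]
  have hval : c' u = c w := by
    show (if u = u then c w else _) = c w
    rw [if_pos rfl]
  rw [hval] at this
  exact c.valid hadjuw this.symm

lemma copy_bound {n m : ℕ} (hn : 2 ≤ n) (hm : 3 ≤ m) {S : Finset (Fin n × Fin m)}
    {C₀ : Fin n × Fin m → Fin m}
    (h : IsSudokuColoring (cycleK n m) m S C₀) (i : Fin n) :
    m - 2 ≤ (Finset.univ.filter fun a : Fin m => (i, a) ∈ S).card := by
  by_contra hlt
  push_neg at hlt
  obtain ⟨c, hcS, huniq⟩ := h
  -- the set of uncolored positions in copy i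
  have hcards := Finset.card_filter_add_card_filter_not
    (s := (Finset.univ : Finset (Fin m))) (p := fun a : Fin m => (i, a) ∈ S)
  rw [Finset.card_univ, Fintype.card_fin] at hcards
  set U : Finset (Fin m) := Finset.univ.filter (fun a : Fin m => ¬ (i, a) ∈ S) with hU
  have hUcard : 3 ≤ U.card := by omega
  -- split U into high (≥ 2) and low parts
  have hcards2 := Finset.card_filter_add_card_filter_not
    (s := U) (p := fun a : Fin m => 2 ≤ (a : ℕ))
  set U2 : Finset (Fin m) := U.filter (fun a : Fin m => 2 ≤ (a : ℕ)) with hU2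
  have hU2card : 1 ≤ U2.card := by
    have hsub : U.filter (fun a : Fin m => ¬ 2 ≤ (a : ℕ)) ⊆
        {(⟨0, by omega⟩ : Fin m), ⟨1, by omega⟩} := by
      intro a ha
      simp only [Finset.mem_filter] at ha
      simp only [Finset.mem_insert, Finset.mem_singleton, Fin.ext_iff]
      omega
    have := Finset.card_le_card hsub
    have hle2 : ({(⟨0, by omega⟩ : Fin m), ⟨1, by omega⟩} : Finset (Fin m)).card ≤ 2 :=
      Finset.card_insert_le _ _ |>.trans (by simp)
    omega
  obtain ⟨w2, hw2⟩ := Finset.card_pos.mp (by omega : 0 < U2.card)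
  have hw2U : w2 ∈ U := Finset.filter_subset _ _ hw2
  have hw2ge : 2 ≤ (w2 : ℕ) := (Finset.mem_filter.mp hw2).2
  have hw2S : (i, w2) ∉ S := by
    have := Finset.mem_filter.mp hw2U
    exact this.2
  by_cases hU22 : 2 ≤ U2.card
  · -- two uncolored internal vertices: swap them
    obtain ⟨a, haU, b, hbU, hab⟩ := Finset.one_lt_card.mp hU22
    have haS : (i, a) ∉ S := (Finset.mem_filter.mp (Finset.filter_subset _ _ haU)).2
    have hbS : (i, b) ∉ S := (Finset.mem_filter.mp (Finset.filter_subset _ _ hbU)).2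
    have hage : 2 ≤ (a : ℕ) := (Finset.mem_filter.mp haU).2
    have hbge : 2 ≤ (b : ℕ) := (Finset.mem_filter.mp hbU).2
    refine swap_contra hn c hcS huniq (i, a) (i, b) rfl
      (fun hh => hab (congrArg Prod.snd hh)) haS hbS ?_ ?_
    · intro y hadj hy1
      exact absurd (cycleK_no_ext hage hadj) hy1
    · intro y hadj hy1
      exact absurd (cycleK_no_ext hbge hadj) hy1
  · -- then both (i,0) and (i,1) are uncolored
    have hlow : 2 ≤ (U.filter (fun a : Fin m => ¬ 2 ≤ (a : ℕ))).card := by omega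
    have h0U : (⟨0, by omega⟩ : Fin m) ∈ U := by
      by_contra h0
      have hsub1 : U.filter (fun a : Fin m => ¬ 2 ≤ (a : ℕ)) ⊆ {(⟨1, by omega⟩ : Fin m)} := by
        intro a ha
        obtain ⟨haU, halt⟩ := Finset.mem_filter.mp ha
        simp only [Finset.mem_singleton, Fin.ext_iff]
        rcases (by omega : (a : ℕ) = 0 ∨ (a : ℕ) = 1) with h | h
        · exact absurd ((Fin.ext h : a = ⟨0, by omega⟩) ▸ haU) h0
        · exact h
      have hc1 := Finset.card_le_card hsub1
      rw [Finset.card_singleton] at hc1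
      omega
    have h1U : (⟨1, by omega⟩ : Fin m) ∈ U := by
      by_contra h1
      have hsub1 : U.filter (fun a : Fin m => ¬ 2 ≤ (a : ℕ)) ⊆ {(⟨0, by omega⟩ : Fin m)} := by
        intro a ha
        obtain ⟨haU, halt⟩ := Finset.mem_filter.mp ha
        simp only [Finset.mem_singleton, Fin.ext_iff]
        rcases (by omega : (a : ℕ) = 0 ∨ (a : ℕ) = 1) with h | h
        · exact h
        · exact absurd ((Fin.ext h : a = ⟨1, by omega⟩) ▸ haU) h1
      have hc1 := Finset.card_le_card hsub1
      rw [Finset.card_singleton] at hc1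
      omega
    have h0S : (i, (⟨0, by omega⟩ : Fin m)) ∉ S := (Finset.mem_filter.mp h0U).2
    have h1S : (i, (⟨1, by omega⟩ : Fin m)) ∉ S := (Finset.mem_filter.mp h1U).2
    set yminus : Fin n × Fin m :=
      (⟨((i : ℕ) + n - 1) % n, Nat.mod_lt _ (by omega)⟩, ⟨1, by omega⟩) with hym
    set yplus : Fin n × Fin m :=
      (⟨((i : ℕ) + 1) % n, Nat.mod_lt _ (by omega)⟩, ⟨0, by omega⟩) with hyp
    have hw20 : (⟨0, by omega⟩ : Fin m) ≠ w2 := by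
      intro hh
      rw [← hh] at hw2ge
      simp at hw2ge
    have hw21 : (⟨1, by omega⟩ : Fin m) ≠ w2 := by
      intro hh
      rw [← hh] at hw2ge
      simp at hw2ge
    by_cases hA : c (i, w2) ≠ c yminus
    · refine swap_contra hn c hcS huniq (i, (⟨0, by omega⟩ : Fin m)) (i, w2) rfl
        (fun hh => hw20 (congrArg Prod.snd hh)) h0S hw2S ?_
        (fun y hadj hy1 => absurd (cycleK_no_ext hw2ge hadj) hy1)
      intro y hadj hy1
      rw [cycleK_ext_snd0 hn hm rfl hadj hy1]
      exact hA
    · by_cases hB : c (i, w2) ≠ c yplus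
      · refine swap_contra hn c hcS huniq (i, (⟨1, by omega⟩ : Fin m)) (i, w2) rfl
          (fun hh => hw21 (congrArg Prod.snd hh)) h1S hw2S ?_
          (fun y hadj hy1 => absurd (cycleK_no_ext hw2ge hadj) hy1)
        intro y hadj hy1
        rw [cycleK_ext_snd1 hn hm rfl hadj hy1]
        exact hB
      · push_neg at hA hB
        refine swap_contra hn c hcS huniq (i, (⟨0, by omega⟩ : Fin m))
          (i, (⟨1, by omega⟩ : Fin m)) rfl
          (fun hh => by simpa [Fin.ext_iff] using congrArg Prod.snd hh) h0S h1S ?_ ?_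
        · intro y hadj hy1
          rw [cycleK_ext_snd0 hn hm rfl hadj hy1, ← hA]
          exact c.valid (cycleK_adj_copy (i := i)
            (a := ⟨1, by omega⟩) (b := w2) (fun hh => hw21 hh))
        · intro y hadj hy1
          rw [cycleK_ext_snd1 hn hm rfl hadj hy1, ← hB]
          exact c.valid (cycleK_adj_copy (i := i)
            (a := ⟨0, by omega⟩) (b := w2) (fun hh => hw20 hh))

lemma sk_lower {n m : ℕ} (hn : 2 ≤ n) (hm : 3 ≤ m) {S : Finset (Fin n × Fin m)}
    {C₀ : Fin n × Fin m → Fin m}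
    (h : IsSudokuColoring (cycleK n m) m S C₀) : n * (m - 2) ≤ S.card := by
  have hsum : S.card = ∑ i : Fin n, (S.filter fun x => x.1 = i).card :=
    Finset.card_eq_sum_card_fiberwise (fun x _ => Finset.mem_univ x.1)
  have hfib : ∀ i : Fin n, m - 2 ≤ (S.filter fun x => x.1 = i).card := by
    intro i
    refine le_trans (copy_bound hn hm h i) ?_
    have himg : (Finset.univ.filter fun a : Fin m => (i, a) ∈ S).image (fun a => (i, a)) ⊆
        S.filter fun x => x.1 = i := by
      intro x hx
      obtain ⟨a, ha, rfl⟩ := Finset.mem_image.mp hx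
      exact Finset.mem_filter.mpr ⟨(Finset.mem_filter.mp ha).2, rfl⟩
    have hinj : Function.Injective (fun a : Fin m => ((i, a) : Fin n × Fin m)) :=
      fun a b hab => congrArg Prod.snd hab
    calc (Finset.univ.filter fun a : Fin m => (i, a) ∈ S).card
        = ((Finset.univ.filter fun a : Fin m => (i, a) ∈ S).image fun a => (i, a)).card :=
          (Finset.card_image_of_injective _ hinj).symm
      _ ≤ _ := Finset.card_le_card himg
  calc n * (m - 2) = ∑ _i : Fin n, (m - 2) := by
        rw [Finset.sum_const, Finset.card_univ, Fintype.card_fin, smul_eq_mul]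
    _ ≤ ∑ i : Fin n, (S.filter fun x => x.1 = i).card :=
        Finset.sum_le_sum fun i _ => hfib i
    _ = S.card := hsum.symm

theorem sudokuNumber_cycleK_aux (n m : ℕ) (hn : 2 ≤ n) (hm : 3 ≤ m) :
    sInf {k | ∃ (S : Finset (Fin n × Fin m)) (C₀ : Fin n × Fin m →
        Fin (cycleK n m).chromaticNumber.toNat),
      IsSudokuColoring (cycleK n m) (cycleK n m).chromaticNumber.toNat S C₀ ∧ S.card = k}
      = n * (m - 2) := by
  have hchi : (cycleK n m).chromaticNumber.toNat = m := by
    rw [cycleK_chromaticNumber hn hm, ENat.toNat_coe]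
  rw [hchi]
  have hmem : n * (m - 2) ∈ {k | ∃ (S : Finset (Fin n × Fin m)) (C₀ : Fin n × Fin m → Fin m),
      IsSudokuColoring (cycleK n m) m S C₀ ∧ S.card = k} :=
    ⟨skSet n m, fun x => ⟨skC n x, skC_lt hn hm x⟩, sk_isSudoku hn hm, skSet_card hm⟩
  refine le_antisymm (Nat.sInf_le hmem) (le_csInf ⟨_, hmem⟩ ?_)
  rintro b ⟨S, C₀, hsud, rfl⟩
  exact sk_lower hn hm hsud

/-- For `n ≥ 2` and `m ≥ 3`, the graph `C_{2n}(K_m)` has Sudoku number `n(m - 2)`. -/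
theorem sudokuNumber_cycleK (n m : ℕ) (hn : 2 ≤ n) (hm : 3 ≤ m) :
    sudokuNumber (cycleK n m) = n * (m - 2) := by
  unfold sudokuNumber
  exact sudokuNumber_cycleK_aux n m hn hm
end

section
/- For n ≥ 2 and m ≥ 4, the graph C_{2n}(K_m^-) satisfies sn(C_{2n}(K_m^-)) = (m − 3)n + 1. -/
open SimpleGraph

/-- The graph `C_{2n}(K_m^-)`, obtained from `C_{2n}(K_m)` (the cycle
`C_{2n} = x_1 x_2 ⋯ x_{2n} x_1` with each alternate edge `x_{2i-1} x_{2i}` identified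
with an edge of a distinct copy of `K_m`) by deleting the `n` edges `x_{2i-1} x_{2i}`.
The vertex `(i, a)` is the `a`-th vertex of the `i`-th copy of `K_m`, with
`x_{2i-1} = (i, 0)` and `x_{2i} = (i, 1)`; two vertices are adjacent iff they lie in
the same copy and are not the pair `{x_{2i-1}, x_{2i}}`, or they are `x_{2i}` and
`x_{2i+1}` (indices mod `2n`). -/
def cycleKminus (n m : ℕ) : SimpleGraph (Fin n × Fin m) :=
  SimpleGraph.fromRel fun x y =>
    (x.1 = y.1 ∧ (2 ≤ (x.2 : ℕ) ∨ 2 ≤ (y.2 : ℕ))) ∨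
    ((y.1 : ℕ) = ((x.1 : ℕ) + 1) % n ∧ (x.2 : ℕ) = 1 ∧ (y.2 : ℕ) = 0)


/-!
Call `(i, 0)` and `(i, 1)` (the paper's `x_{2i-1}`, `x_{2i}`) the bottom vertices of copy `i`, and
`(i, a)` with `2 ≤ a` its top vertices. In a proper colouring `c` with `m - 1` colours, the `m - 2`
top vertices of copy `i` form a clique with either bottom vertex, so both bottom vertices get the
one colour `β i` missing on top, and `β` properly colours the `n`-cycle along the edges
`(i, 1) (i + 1, 0)`.

Upper bound: fix `c` on all top vertices of copy `0`, and on all top vertices of copy `i ≠ 0`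
except the one coloured `β (i - 1)`. Then `β 0` is forced, and around the cycle `β i` forces
`β (i + 1)` and with it the colour of the free vertex of copy `i + 1`.

Lower bound: two top vertices of a copy are adjacent twins, so a determining set `S` misses at most
one of them. If `|S| ≤ (m - 3) n`, counting shows that `S` misses exactly the bottom vertices and
one top vertex `v i` of every copy. Any proper cycle colouring `β'` with
`β' i ∈ {β i, c (i, v i)}` then extends `c` on `S` (swap the colours `β i` and `β' i` inside
copy `i`), and there is always such a `β' ≠ β`.
-/

namespace SimpleGraph

variable {V α : Type*} {G : SimpleGraph V}

def Coloring.DeterminedBy (c : G.Coloring α) (S : Set V) : Prop :=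
  ∀ c' : G.Coloring α, Set.EqOn c' c S → c' = c

theorem sudokuNumber_eq_of_determinedBy [Fintype V] {k N : ℕ}
    (hχ : G.chromaticNumber.toNat = k)
    (hex : ∃ (S : Finset V) (c : G.Coloring (Fin k)), c.DeterminedBy S ∧ S.card = N)
    (hmin : ∀ (S : Finset V) (c : G.Coloring (Fin k)), c.DeterminedBy S → N ≤ S.card) :
    sudokuNumber G = N := by
  subst hχ
  obtain ⟨S, c, hc, rfl⟩ := hex
  have hS : IsSudokuColoring G _ S c := ⟨c, fun _ _ => rfl, fun c' h => hc c' h⟩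
  refine le_antisymm (Nat.sInf_le ⟨S, c, hS, rfl⟩) (le_csInf ⟨_, S, c, hS, rfl⟩ ?_)
  rintro _ ⟨T, C₀, ⟨c₀, hc₀, huniq⟩, rfl⟩
  exact hmin T c₀ fun c' h => huniq c' fun v hv => (h hv).trans (hc₀ v hv)

theorem adj_swap_of_twins [DecidableEq V] {u w : V}
    (htwin : ∀ x, x ≠ u → x ≠ w → (G.Adj u x ↔ G.Adj w x)) {x y : V} (h : G.Adj x y) :
    G.Adj (Equiv.swap u w x) (Equiv.swap u w y) := by
  have htwin' : ∀ x, x ≠ u → x ≠ w → (G.Adj x u ↔ G.Adj x w) := fun x hu hw => by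
    rw [adj_comm, htwin x hu hw, adj_comm]
  by_cases hxu : x = u <;> by_cases hxw : x = w <;> by_cases hyu : y = u <;>
    by_cases hyw : y = w <;> simp_all [Equiv.swap_apply_of_ne_of_ne] <;> exact h.symm

theorem Coloring.DeterminedBy.mem_or_mem_of_twins {c : G.Coloring α} {S : Set V}
    (hc : c.DeterminedBy S) {u w : V} (huw : G.Adj u w)
    (htwin : ∀ x, x ≠ u → x ≠ w → (G.Adj u x ↔ G.Adj w x)) : u ∈ S ∨ w ∈ S := by
  classical
  by_contra! h
  let c' : G.Coloring α :=
    Coloring.mk (c ∘ Equiv.swap u w) fun hxy => c.valid (adj_swap_of_twins htwin hxy)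
  have hc' : c' = c := hc c' fun x hx => by
    show c (Equiv.swap u w x) = c x
    rw [Equiv.swap_apply_of_ne_of_ne (ne_of_mem_of_not_mem hx h.1) (ne_of_mem_of_not_mem hx h.2)]
  have hu : c (Equiv.swap u w u) = c u := DFunLike.congr_fun hc' u
  rw [Equiv.swap_apply_left] at hu
  exact c.valid huw hu.symm

theorem cycleGraph_adj_add_one {n : ℕ} [NeZero n] (hn : 2 ≤ n) (i : Fin n) :
    (cycleGraph n).Adj i (i + 1) := by
  rw [cycleGraph_adj', add_sub_cancel_left, Fin.val_one', Nat.mod_eq_of_lt hn]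
  exact Or.inr rfl

end SimpleGraph

theorem Finset.card_add_sum_card_filter_notMem {ι κ : Type*} [Fintype ι] [Fintype κ]
    [DecidableEq ι] [DecidableEq κ] (S : Finset (ι × κ)) :
    S.card + ∑ i, (univ.filter fun a => (i, a) ∉ S).card = Fintype.card ι * Fintype.card κ := by
  have : ∑ i, (univ.filter fun a => (i, a) ∉ S).card = Sᶜ.card := by
    simp only [card_filter, ← Fintype.sum_prod_type' fun i a => if (i, a) ∉ S then 1 else 0]
    rw [← card_filter, ← compl_filter]
    simp
  rw [this, card_add_card_compl, Fintype.card_prod]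

namespace Fin

variable {n : ℕ} [NeZero n]

theorem induction_add_one {P : Fin n → Prop} (zero : P 0) (add_one : ∀ i, P i → P (i + 1))
    (i : Fin n) : P i := by
  obtain ⟨k, rfl⟩ := Nat.exists_eq_succ_of_ne_zero (NeZero.ne n)
  induction i using Fin.induction with
  | zero => exact zero
  | succ i ih => rw [← Fin.coeSucc_eq_succ]; exact add_one _ ih

theorem eq_add_one_iff_val {i j : Fin n} : j = i + 1 ↔ (j : ℕ) = ((i : ℕ) + 1) % n := by
  rw [Fin.ext_iff, Fin.val_add, Fin.val_one', Nat.add_mod_mod]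

theorem add_one_eq_zero_iff (y : Fin n) : y + 1 = 0 ↔ y.val + 1 = n := by
  rw [Fin.ext_iff, Fin.val_add, Fin.val_one', Fin.val_zero, Nat.add_mod_mod]
  rcases Nat.lt_or_ge (y.val + 1) n with h | h
  · rw [Nat.mod_eq_of_lt h]; omega
  · rw [show y.val + 1 = n by omega, Nat.mod_self]; simp

theorem val_sub_add_one_lt_iff (x s : Fin n) : (x - s).val + 1 < n ↔ x + 1 ≠ s := by
  rw [ne_eq, ← sub_eq_zero, ← _root_.sub_add_eq_add_sub, add_one_eq_zero_iff]
  have := (x - s).isLt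
  omega

theorem val_add_one_sub {x s : Fin n} (h : x + 1 ≠ s) : (x + 1 - s).val = (x - s).val + 1 := by
  rw [← _root_.sub_add_eq_add_sub, val_add_one_of_lt' ((val_sub_add_one_lt_iff x s).2 h)]

end Fin

section CycleColoring

variable {n : ℕ} [NeZero n] {α : Type*} {b o : Fin n → α}

/-- Switch `b` to `o` on the arc `s, s + 1, …, s + (L - 1)`. -/
theorem exists_ne_cycleColoring_of_arc (hbo : ∀ i, b i ≠ o i) (hb : ∀ i, b i ≠ b (i + 1))
    (s : Fin n) {L : ℕ} (hL : 0 < L) (hLn : L < n) (hstart : o s ≠ b (s - 1))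
    (hrun : ∀ x, (x - s).val + 1 < L → o x = b (x + 1))
    (hend : ∀ x, (x - s).val + 1 = L → o x ≠ b (x + 1)) :
    ∃ b' : Fin n → α, b' ≠ b ∧ (∀ i, b' i = b i ∨ b' i = o i) ∧ ∀ i, b' i ≠ b' (i + 1) := by
  refine ⟨fun x => if (x - s).val < L then o x else b x, fun h => hbo s ?_,
    fun i => by dsimp only; split_ifs <;> simp, fun x => ?_⟩
  · simpa [hL] using (congrFun h s).symm
  dsimp only
  by_cases hx : x + 1 = s
  · have hxs : ¬ (x - s).val + 1 < n := fun h => (Fin.val_sub_add_one_lt_iff x s).1 h hx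
    rw [if_neg (by omega), hx, sub_self, Fin.val_zero, if_pos hL]
    intro h
    rw [← h, ← hx, add_sub_cancel_right] at hstart
    exact hstart rfl
  rw [Fin.val_add_one_sub hx]
  by_cases h₁ : (x - s).val + 1 < L
  · rw [if_pos (by omega), if_pos h₁, hrun x h₁]
    exact hbo (x + 1)
  by_cases h₂ : (x - s).val + 1 = L
  · rw [if_pos (by omega), if_neg (by omega)]
    exact hend x h₂
  · rw [if_neg (by omega), if_neg (by omega)]
    exact hb x

/-- Summing `h ∘ o` against `h ∘ b` shifted either way gives `{o t, b t} = {o (t + 1), b (t + 1)}`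
as multisets. -/
theorem apply_eq_apply_add_one_of_shift (t : Fin n) (hA : ∀ x ≠ t, o x = b (x + 1))
    (hB : ∀ x ≠ t + 1, o x = b (x - 1)) (ht : o t = o (t + 1)) : b t = b (t + 1) := by
  classical
  have key : ∀ h : α → ℤ, h (b t) = h (b (t + 1)) := by
    intro h
    have e₁ : ∑ x, (h (o x) - h (b (x + 1))) = h (o t) - h (b (t + 1)) :=
      Finset.sum_eq_single t (fun x _ hx => by rw [hA x hx, sub_self]) (by simp)
    have e₂ : ∑ x, (h (o x) - h (b (x - 1))) = h (o (t + 1)) - h (b t) := by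
      rw [Finset.sum_eq_single (t + 1) (fun x _ hx => by rw [hB x hx, sub_self]) (by simp),
        add_sub_cancel_right]
    have e₃ : ∑ x, h (b (x + 1)) = ∑ x, h (b (x - 1)) :=
      (Equiv.sum_comp (Equiv.addRight 1) (h ∘ b)).trans
        (Equiv.sum_comp (Equiv.subRight 1) (h ∘ b)).symm
    rw [Finset.sum_sub_distrib, e₃, ← Finset.sum_sub_distrib, e₂, ht] at e₁
    linarith
  simpa using key fun y => if y = b (t + 1) then 1 else 0

/-- If `o` is not itself a proper colouring, it repeats a colour on some edge `t, t + 1`. Flip an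
arc starting at `t + 1` or ending at `t`; if no such arc works, `o` is `b` shifted forwards off `t`
and backwards off `t + 1`, which `apply_eq_apply_add_one_of_shift` rules out. -/
theorem exists_ne_cycleColoring_of_pairs (hbo : ∀ i, b i ≠ o i) (hb : ∀ i, b i ≠ b (i + 1)) :
    ∃ b' : Fin n → α, b' ≠ b ∧ (∀ i, b' i = b i ∨ b' i = o i) ∧ ∀ i, b' i ≠ b' (i + 1) := by
  classical
  by_cases ho : ∀ i, o i ≠ o (i + 1)
  · exact ⟨o, fun h => hbo 0 (congrFun h 0).symm, fun i => Or.inr rfl, ho⟩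
  push Not at ho
  obtain ⟨t, ht⟩ := ho
  have hstart : o (t + 1) ≠ b (t + 1 - 1) := by
    rw [add_sub_cancel_right, ← ht]
    exact (hbo t).symm
  by_cases hA : ∃ x ≠ t, o x ≠ b (x + 1)
  · obtain ⟨e, he, hmin⟩ := (Finset.univ.filter fun x => x ≠ t ∧ o x ≠ b (x + 1)).exists_min_image
      (fun x => (x - (t + 1)).val) (by obtain ⟨x, hx⟩ := hA; exact ⟨x, by simpa using hx⟩)
    simp only [Finset.mem_filter, Finset.mem_univ, true_and] at he hmin
    have hLn := (Fin.val_sub_add_one_lt_iff e _).2 ((add_left_injective 1).ne he.1)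
    refine exists_ne_cycleColoring_of_arc hbo hb (t + 1) (L := (e - (t + 1)).val + 1) (by omega)
      hLn hstart (fun x hx => ?_) (fun x hx => ?_)
    · by_contra hne
      have hxt : x ≠ t := by
        rintro rfl
        exact (Fin.val_sub_add_one_lt_iff x (x + 1)).1 (by omega) rfl
      have := hmin x ⟨hxt, hne⟩
      omega
    · rw [sub_left_inj.1 (Fin.ext (by omega) : x - (t + 1) = e - (t + 1))]
      exact he.2
  push Not at hA
  by_cases hB : ∃ r ≠ t + 1, o r ≠ b (r - 1)
  · obtain ⟨r, hrt, hr⟩ := hB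
    refine exists_ne_cycleColoring_of_arc hbo hb r (L := (t - r).val + 1) (by omega)
      ((Fin.val_sub_add_one_lt_iff t r).2 hrt.symm) hr (fun x hx => hA x fun h => ?_)
      (fun x hx => ?_)
    · subst h
      omega
    · rw [sub_left_inj.1 (Fin.ext (by omega) : x - r = t - r), ht]
      exact (hbo (t + 1)).symm
  push Not at hB
  exact (hb t (apply_eq_apply_add_one_of_shift t hA hB ht)).elim

end CycleColoring

namespace CycleKminus

open Finset

variable {n m : ℕ} {α : Type*}

theorem adj_of_ne_of_two_le {i : Fin n} {a b : Fin m} (hab : a ≠ b)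
    (h : 2 ≤ (a : ℕ) ∨ 2 ≤ (b : ℕ)) : (cycleKminus n m).Adj (i, a) (i, b) := by
  simp [cycleKminus, hab, h]

theorem adj_iff_of_two_le {i : Fin n} {a : Fin m} (ha : 2 ≤ (a : ℕ)) {y : Fin n × Fin m} :
    (cycleKminus n m).Adj (i, a) y ↔ y.1 = i ∧ y.2 ≠ a := by
  obtain ⟨j, b⟩ := y
  simp only [cycleKminus, fromRel_adj, ne_eq, Prod.mk.injEq]
  constructor
  · rintro ⟨hne, (⟨rfl, -⟩ | ⟨-, h, -⟩) | (⟨rfl, -⟩ | ⟨-, -, h⟩)⟩ <;> omega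
  · rintro ⟨rfl, hb⟩
    exact ⟨fun h => hb h.2.symm, Or.inl (Or.inl ⟨rfl, Or.inl ha⟩)⟩

theorem mem_or_mem_of_determinedBy {c : (cycleKminus n m).Coloring α}
    {S : Set (Fin n × Fin m)} (hc : c.DeterminedBy S) (i : Fin n) {a b : Fin m}
    (ha : 2 ≤ (a : ℕ)) (hb : 2 ≤ (b : ℕ)) (hab : a ≠ b) : (i, a) ∈ S ∨ (i, b) ∈ S := by
  refine hc.mem_or_mem_of_twins (adj_of_ne_of_two_le hab (Or.inl ha)) fun x hxa hxb => ?_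
  rw [adj_iff_of_two_le ha, adj_iff_of_two_le hb]
  constructor <;> rintro ⟨rfl, -⟩
  · exact ⟨rfl, fun h => hxb (by rw [← h])⟩
  · exact ⟨rfl, fun h => hxa (by rw [← h])⟩

theorem eq_zero_or_eq_one_or_two_le (a : Fin (m + 2)) : a = 0 ∨ a = 1 ∨ 2 ≤ (a : ℕ) := by
  simp only [Fin.ext_iff, Fin.val_zero, Fin.val_one]
  omega

section Bottom

variable [NeZero n]

theorem adj_add_one (i : Fin n) : (cycleKminus n (m + 2)).Adj (i, 1) (i + 1, 0) := by
  simp only [cycleKminus, fromRel_adj, ne_eq, Prod.mk.injEq]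
  exact ⟨by simp, Or.inl (Or.inr ⟨Fin.eq_add_one_iff_val.1 rfl, by simp, by simp⟩)⟩

theorem adj_cases {x y : Fin n × Fin (m + 2)} (h : (cycleKminus n (m + 2)).Adj x y) :
    (x.1 = y.1 ∧ x.2 ≠ y.2 ∧ (2 ≤ (x.2 : ℕ) ∨ 2 ≤ (y.2 : ℕ))) ∨
      ∃ i, (x = (i, 1) ∧ y = (i + 1, 0)) ∨ (x = (i + 1, 0) ∧ y = (i, 1)) := by
  obtain ⟨i, a⟩ := x
  obtain ⟨j, b⟩ := y
  simp only [cycleKminus, fromRel_adj, ne_eq, Prod.mk.injEq] at h ⊢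
  have h₁ : ∀ a : Fin (m + 2), (a : ℕ) = 1 → a = 1 := fun a h => Fin.ext (by simp [h])
  have h₀ : ∀ a : Fin (m + 2), (a : ℕ) = 0 → a = 0 := fun a h => Fin.ext (by simp [h])
  rcases h with ⟨hne, (⟨rfl, htop⟩ | ⟨hj, ha, hb⟩) | (⟨rfl, htop⟩ | ⟨hi, hb, ha⟩)⟩
  · exact Or.inl ⟨rfl, fun h => hne ⟨rfl, h⟩, htop⟩
  · exact Or.inr ⟨i, Or.inl ⟨⟨rfl, h₁ a ha⟩, Fin.eq_add_one_iff_val.2 hj, h₀ b hb⟩⟩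
  · exact Or.inl ⟨rfl, fun h => hne ⟨rfl, h⟩, htop.symm⟩
  · exact Or.inr ⟨j, Or.inr ⟨⟨Fin.eq_add_one_iff_val.2 hi, h₀ a ha⟩, rfl, h₁ b hb⟩⟩

def recolor [DecidableEq α] (f : Fin n × Fin (m + 2) → α)
    (hf : ∀ i (a b : Fin (m + 2)), a ≠ b → (2 ≤ (a : ℕ) ∨ 2 ≤ (b : ℕ)) → f (i, a) ≠ f (i, b))
    (hf₁ : ∀ i, f (i, 1) = f (i, 0)) (β : Fin n → α) (hβ : ∀ i, β i ≠ β (i + 1)) :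
    (cycleKminus n (m + 2)).Coloring α :=
  Coloring.mk (fun x => Equiv.swap (f (x.1, 0)) (β x.1) (f x)) <| by
    intro x y h
    rcases adj_cases h with ⟨hxy, hab, htop⟩ | ⟨i, ⟨rfl, rfl⟩ | ⟨rfl, rfl⟩⟩
    · obtain ⟨i, a⟩ := x
      obtain ⟨j, b⟩ := y
      dsimp only at hxy hab htop ⊢
      subst hxy
      exact (Equiv.injective _).ne (hf i a b hab htop)
    · simpa [hf₁] using hβ i
    · simpa [hf₁] using (hβ i).symm

@[simp]
theorem recolor_apply [DecidableEq α] (f : Fin n × Fin (m + 2) → α) (hf) (hf₁) (β : Fin n → α)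
    (hβ) (x : Fin n × Fin (m + 2)) :
    recolor f hf hf₁ β hβ x = Equiv.swap (f (x.1, 0)) (β x.1) (f x) :=
  rfl

end Bottom

-- The theorem's graph is `cycleKminus n (m + 3)`: from here on `m` is the paper's `m - 3`.

theorem exists_subset_insert {U : Finset (Fin (m + 3))}
    (hU : ∀ a ∈ U, ∀ b ∈ U, 2 ≤ (a : ℕ) → 2 ≤ (b : ℕ) → a = b) :
    ∃ v : Fin (m + 3), 2 ≤ (v : ℕ) ∧ U ⊆ {0, 1, v} := by
  obtain ⟨v, hv₂, hv⟩ : ∃ v : Fin (m + 3), 2 ≤ (v : ℕ) ∧ ∀ a ∈ U, 2 ≤ (a : ℕ) → a = v := by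
    by_cases h : ∃ v ∈ U, 2 ≤ (v : ℕ)
    · obtain ⟨v, hv, hv₂⟩ := h
      exact ⟨v, hv₂, fun a ha ha₂ => hU a ha v hv ha₂ hv₂⟩
    · exact ⟨2, le_refl _, fun a ha ha₂ => absurd ⟨a, ha, ha₂⟩ h⟩
  refine ⟨v, hv₂, fun a ha => ?_⟩
  rcases eq_zero_or_eq_one_or_two_le a with rfl | rfl | ha₂
  · simp
  · simp
  · simp [hv a ha ha₂]

theorem card_tops : (univ.filter fun a : Fin (m + 3) => 2 ≤ (a : ℕ)).card = m + 1 := by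
  rw [show (univ.filter fun a : Fin (m + 3) => 2 ≤ (a : ℕ)) = Ici 2 by
    ext; simp only [mem_filter, mem_univ, true_and, mem_Ici, Fin.le_def, Fin.val_two],
    Fin.card_Ici, Fin.val_two]
  rfl

theorem card_image_tops [DecidableEq α] (c : (cycleKminus n (m + 3)).Coloring α) (i : Fin n) :
    ((univ.filter fun a : Fin (m + 3) => 2 ≤ (a : ℕ)).image fun a => c (i, a)).card = m + 1 := by
  rw [card_image_of_injOn, card_tops]
  intro a ha b hb hab
  by_contra hne
  exact c.valid (adj_of_ne_of_two_le hne (Or.inl (by simpa using ha))) hab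

variable [Fintype α]

theorem image_tops_subset_erase [DecidableEq α] (c : (cycleKminus n (m + 3)).Coloring α)
    (i : Fin n) :
    (univ.filter fun a : Fin (m + 3) => 2 ≤ (a : ℕ)).image (fun a => c (i, a)) ⊆
      univ.erase (c (i, 0)) := by
  intro γ hγ
  simp only [mem_image, mem_filter, mem_univ, true_and] at hγ
  obtain ⟨a, ha, rfl⟩ := hγ
  exact mem_erase.2 ⟨c.valid (adj_of_ne_of_two_le (fun h => by simp [h] at ha) (Or.inl ha)),
    mem_univ _⟩

theorem exists_top_eq (hα : Fintype.card α ≤ m + 2) (c : (cycleKminus n (m + 3)).Coloring α)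
    (i : Fin n) {γ : α} (hγ : γ ≠ c (i, 0)) : ∃ a : Fin (m + 3), 2 ≤ (a : ℕ) ∧ c (i, a) = γ := by
  classical
  have heq := eq_of_subset_of_card_le (image_tops_subset_erase c i) (by
    rw [card_image_tops, card_erase_of_mem (mem_univ _), card_univ]; omega)
  have hγ' : γ ∈ univ.erase (c (i, 0)) := mem_erase.2 ⟨hγ, mem_univ γ⟩
  rw [← heq] at hγ'
  simpa using hγ'

theorem apply_one_eq_apply_zero (hα : Fintype.card α ≤ m + 2)
    (c : (cycleKminus n (m + 3)).Coloring α) (i : Fin n) : c (i, 1) = c (i, 0) := by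
  by_contra h
  obtain ⟨a, ha, hca⟩ := exists_top_eq hα c i h
  exact c.valid (adj_of_ne_of_two_le (fun h => by simp [h] at ha) (Or.inl ha)) hca

variable [NeZero n]

theorem colorable (hn : 2 ≤ n) (hm : 1 ≤ m) : (cycleKminus n (m + 3)).Colorable (m + 2) :=
  -- truncated `a - 1` gives both bottom vertices colour `0` and the top ones `1, …, m + 1`
  ⟨recolor (fun x => ⟨(x.2 : ℕ) - 1, by omega⟩)
    (fun i a b hab h => by simp only [ne_eq, Fin.mk.injEq]; omega)
    (fun i => by simp)
    (Fin.castLE (by omega) ∘ cycleGraph.tricoloring n hn)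
    (fun i => (Fin.castLE_injective _).ne ((cycleGraph.tricoloring n hn).valid
      (cycleGraph_adj_add_one hn i)))⟩

theorem add_two_le_card (c : (cycleKminus n (m + 3)).Coloring α) : m + 2 ≤ Fintype.card α := by
  classical
  have := card_le_card (image_tops_subset_erase c 0)
  rw [card_image_tops, card_erase_of_mem (mem_univ _), card_univ] at this
  omega

theorem chromaticNumber_eq (hn : 2 ≤ n) (hm : 1 ≤ m) :
    (cycleKminus n (m + 3)).chromaticNumber = (m + 2 : ℕ) :=
  le_antisymm (colorable hn hm).chromaticNumber_le <|
    le_chromaticNumber_iff_coloring.2 fun _ c => by simpa using add_two_le_card c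

theorem apply_zero_ne_apply_add_one (hα : Fintype.card α ≤ m + 2)
    (c : (cycleKminus n (m + 3)).Coloring α) (i : Fin n) : c (i, 0) ≠ c (i + 1, 0) :=
  apply_one_eq_apply_zero hα c i ▸ c.valid (adj_add_one i)

/-- The top vertex `w (i + 1)` carries the colour of `(i, 0)`, which `c'` already gives to its
neighbour `(i, 1)`; so induction around the cycle pins down every bottom colour. -/
theorem apply_zero_eq_of_apply_top_eq (hα : Fintype.card α ≤ m + 2)
    {c c' : (cycleKminus n (m + 3)).Coloring α} {w : Fin n → Fin (m + 3)}
    (hw : ∀ i, c (i, w i) = c (i - 1, 0))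
    (hc' : ∀ i (a : Fin (m + 3)), 2 ≤ (a : ℕ) → (i = 0 ∨ a ≠ w i) → c' (i, a) = c (i, a))
    (i : Fin n) : c' (i, 0) = c (i, 0) := by
  induction i using Fin.induction_add_one with
  | zero =>
    by_contra h
    obtain ⟨a, ha, hca⟩ := exists_top_eq hα c 0 h
    rw [← hc' 0 a ha (Or.inl rfl)] at hca
    exact c'.valid (adj_of_ne_of_two_le (fun h => by simp [h] at ha) (Or.inl ha)) hca
  | add_one i ih =>
    by_contra h
    obtain ⟨a, ha, hca⟩ := exists_top_eq hα c (i + 1) h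
    by_cases haw : a = w (i + 1)
    · rw [haw, hw, add_sub_cancel_right, ← ih, ← apply_one_eq_apply_zero hα c' i] at hca
      exact c'.valid (adj_add_one i) hca
    · rw [← hc' (i + 1) a ha (Or.inr haw)] at hca
      exact c'.valid (adj_of_ne_of_two_le (fun h => by simp [h] at ha) (Or.inl ha)) hca

theorem determinedBy_of_forall_mem (hα : Fintype.card α ≤ m + 2)
    {c : (cycleKminus n (m + 3)).Coloring α} {w : Fin n → Fin (m + 3)}
    (hw : ∀ i, c (i, w i) = c (i - 1, 0)) {S : Set (Fin n × Fin (m + 3))}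
    (hS : ∀ i (a : Fin (m + 3)), 2 ≤ (a : ℕ) → (i = 0 ∨ a ≠ w i) → (i, a) ∈ S) :
    c.DeterminedBy S := by
  intro c' hc'
  have htop : ∀ i (a : Fin (m + 3)), 2 ≤ (a : ℕ) → (i = 0 ∨ a ≠ w i) → c' (i, a) = c (i, a) :=
    fun i a ha h => hc' (hS i a ha h)
  have hbot := apply_zero_eq_of_apply_top_eq hα hw htop
  ext ⟨i, a⟩
  rcases eq_zero_or_eq_one_or_two_le a with rfl | rfl | ha
  · exact hbot i
  · rw [apply_one_eq_apply_zero hα, apply_one_eq_apply_zero hα, hbot]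
  by_cases h : i = 0 ∨ a ≠ w i
  · exact htop i a ha h
  obtain ⟨-, rfl⟩ : i ≠ 0 ∧ a = w i := by tauto
  by_contra hne
  obtain ⟨b, hb, hcb⟩ := exists_top_eq hα c i (γ := c' (i, w i)) (by
    rw [← hbot]; exact c'.valid (adj_of_ne_of_two_le (fun h => by simp [h] at ha) (Or.inl ha)))
  have hbw : b ≠ w i := fun h => hne (h ▸ hcb).symm
  rw [← htop i b hb (Or.inr hbw)] at hcb
  exact c'.valid (adj_of_ne_of_two_le hbw (Or.inl hb)) hcb

theorem exists_determinedBy_card (hα : Fintype.card α ≤ m + 2)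
    (c : (cycleKminus n (m + 3)).Coloring α) :
    ∃ S : Finset (Fin n × Fin (m + 3)), c.DeterminedBy S ∧ S.card = m * n + 1 := by
  classical
  choose w hw₂ hw using fun i => exists_top_eq hα c i (γ := c (i - 1, 0)) (by
    simpa using apply_zero_ne_apply_add_one hα c (i - 1))
  have htops : (univ.filter fun x : Fin n × Fin (m + 3) => 2 ≤ (x.2 : ℕ)) =
      univ ×ˢ univ.filter fun a : Fin (m + 3) => 2 ≤ (a : ℕ) := by
    ext; simp
  have hsub : (univ.erase 0).image (fun i => (i, w i)) ⊆
      univ.filter fun x : Fin n × Fin (m + 3) => 2 ≤ (x.2 : ℕ) := by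
    intro x hx
    simp only [mem_image, mem_erase] at hx
    obtain ⟨i, -, rfl⟩ := hx
    simpa using hw₂ i
  refine ⟨(univ.filter fun x => 2 ≤ (x.2 : ℕ)) \ (univ.erase 0).image (fun i => (i, w i)),
    determinedBy_of_forall_mem hα hw fun i a ha h => ?_, ?_⟩
  · simp only [mem_coe, mem_sdiff, mem_filter, mem_univ, true_and, mem_image, mem_erase,
      Prod.mk.injEq, not_exists, not_and]
    exact ⟨ha, fun j hj hji hwa => by subst hji; tauto⟩
  · rw [card_sdiff_of_subset hsub, htops, card_product, card_tops,
      card_image_of_injective _ fun i j h => (Prod.ext_iff.1 h).1,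
      card_erase_of_mem (mem_univ _), card_univ, Fintype.card_fin, mul_add_one, mul_comm]
    have := NeZero.ne n
    omega

theorem not_determinedBy (hα : Fintype.card α ≤ m + 2) (c : (cycleKminus n (m + 3)).Coloring α)
    {S : Set (Fin n × Fin (m + 3))} {v : Fin n → Fin (m + 3)} (hv : ∀ i, 2 ≤ (v i : ℕ))
    (hS : ∀ x ∈ S, 2 ≤ (x.2 : ℕ) ∧ x.2 ≠ v x.1) : ¬ c.DeterminedBy S := by
  classical
  intro hc
  obtain ⟨b', hb'ne, hb'mem, hb'⟩ := exists_ne_cycleColoring_of_pairs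
    (b := fun i => c (i, 0)) (o := fun i => c (i, v i))
    (fun i => c.valid (adj_of_ne_of_two_le (fun h => by simpa [← h] using hv i) (Or.inr (hv i))))
    (apply_zero_ne_apply_add_one hα c)
  have hc' := hc (recolor c (fun i a b hab h => c.valid (adj_of_ne_of_two_le hab h))
    (apply_one_eq_apply_zero hα c) b' hb') fun x hx => ?_
  · exact hb'ne (funext fun i => by simpa using DFunLike.congr_fun hc' (i, 0))
  obtain ⟨i, a⟩ := x
  obtain ⟨ha, hav⟩ := hS _ hx
  have h₀ : c (i, a) ≠ c (i, 0) :=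
    c.valid (adj_of_ne_of_two_le (fun h => by simp [h] at ha) (Or.inl ha))
  have hv : c (i, a) ≠ c (i, v i) := c.valid (adj_of_ne_of_two_le hav (Or.inl ha))
  exact Equiv.swap_apply_of_ne_of_ne h₀ (by rcases hb'mem i with h | h <;> rw [h] <;> assumption)

theorem card_le_of_determinedBy (hα : Fintype.card α ≤ m + 2)
    {c : (cycleKminus n (m + 3)).Coloring α} {S : Finset (Fin n × Fin (m + 3))}
    (hc : c.DeterminedBy S) : m * n + 1 ≤ S.card := by
  by_contra! hS
  set U := fun i => univ.filter fun a : Fin (m + 3) => (i, a) ∉ S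
  have hU : ∀ i, ∀ a ∈ U i, ∀ b ∈ U i, 2 ≤ (a : ℕ) → 2 ≤ (b : ℕ) → a = b := by
    intro i a ha b hb ha₂ hb₂
    by_contra hab
    simp only [U, mem_filter, mem_univ, true_and] at ha hb
    rcases mem_or_mem_of_determinedBy hc i ha₂ hb₂ hab with h | h <;> simp_all
  choose v hv₂ hsub using fun i => exists_subset_insert (hU i)
  have hle : ∀ i, (U i).card ≤ 3 := fun i => (card_le_card (hsub i)).trans card_le_three
  have heq : ∀ i, U i = {0, 1, v i} := by
    have hcount : S.card + ∑ i, (U i).card = n * (m + 3) := by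
      simpa using card_add_sum_card_filter_notMem S
    rw [mul_add, mul_comm n m] at hcount
    have hsum := (sum_eq_sum_iff_of_le fun i (_ : i ∈ univ) => hle i).1 <|
      le_antisymm (sum_le_sum fun i _ => hle i) <| by
        rw [sum_const, card_univ, Fintype.card_fin, smul_eq_mul]
        omega
    exact fun i => eq_of_subset_of_card_le (hsub i) (card_le_three.trans (hsum i (mem_univ i)).ge)
  refine not_determinedBy hα c hv₂ (fun x hx => ?_) hc
  have hx' : x.2 ∉ U x.1 := by simpa [U] using hx
  rw [heq] at hx'
  simp only [mem_insert, mem_singleton, not_or] at hx'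
  rcases eq_zero_or_eq_one_or_two_le x.2 with h | h | h
  · exact absurd h hx'.1
  · exact absurd h hx'.2.1
  · exact ⟨h, hx'.2.2⟩

end CycleKminus

/-- For `n ≥ 2` and `m ≥ 4`, the graph `C_{2n}(K_m^-)` has Sudoku number
`(m - 3)n + 1`. -/
theorem sudokuNumber_cycleKminus (n m : ℕ) (hn : 2 ≤ n) (hm : 4 ≤ m) :
    sudokuNumber (cycleKminus n m) = (m - 3) * n + 1 := by
  obtain ⟨m, rfl⟩ : ∃ k, m = k + 3 := ⟨m - 3, by omega⟩
  have : NeZero n := ⟨by omega⟩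
  rw [Nat.add_sub_cancel]
  refine sudokuNumber_eq_of_determinedBy
    (by rw [CycleKminus.chromaticNumber_eq hn (by omega), ENat.toNat_natCast]) ?_
    fun S c hc => CycleKminus.card_le_of_determinedBy (by simp) hc
  obtain ⟨c⟩ := CycleKminus.colorable (m := m) hn (by omega)
  obtain ⟨S, hS, hcard⟩ := CycleKminus.exists_determinedBy_card (by simp) c
  exact ⟨S, c, hS, hcard⟩
end

section
/- For every n ≥ 2, the fan graph F_n satisfies sn(F_n) = 2. -/
open SimpleGraph

/-- The fan graph `F_n`, obtained from the path `P_n = v_1 v_2 ⋯ v_n` (vertices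
`0, …, n - 1`) by joining a new vertex `u` (vertex `n`) to every vertex of the path. -/
def fanGraph (n : ℕ) : SimpleGraph (Fin (n + 1)) :=
  SimpleGraph.fromRel fun a b =>
    ((a : ℕ) + 1 = (b : ℕ) ∧ (b : ℕ) < n) ∨ (b : ℕ) = n

lemma fan_adj {n : ℕ} {a b : Fin (n+1)} : (fanGraph n).Adj a b ↔ a ≠ b ∧
    (((a:ℕ)+1 = b ∧ (b:ℕ) < n) ∨ (b:ℕ) = n ∨ ((b:ℕ)+1 = a ∧ (a:ℕ) < n) ∨ (a:ℕ) = n) := by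
  simp only [fanGraph, SimpleGraph.fromRel_adj]
  tauto

/-- The standard coloring of the fan graph. -/
def stdCol (n : ℕ) (v : Fin (n+1)) : Fin 3 :=
  if (v:ℕ) = n then 0 else if (v:ℕ) % 2 = 0 then 1 else 2

lemma stdCol_valid (n : ℕ) {a b : Fin (n+1)} (h : (fanGraph n).Adj a b) :
    stdCol n a ≠ stdCol n b := by
  rw [fan_adj] at h
  obtain ⟨hne, h⟩ := h
  have hab : (a:ℕ) ≠ (b:ℕ) := fun h => hne (Fin.ext h)
  unfold stdCol
  rcases h with ⟨h1, h2⟩ | h | ⟨h1, h2⟩ | h <;>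
    [ (have ha : (a:ℕ) ≠ n := by omega);
      (have ha : (a:ℕ) ≠ n := by omega);
      (have hb : (b:ℕ) ≠ n := by omega);
      (have hb : (b:ℕ) ≠ n := by omega)] <;>
    simp_all <;> split_ifs <;> simp_all <;> omega

lemma fan_colorable (n : ℕ) : (fanGraph n).Colorable 3 :=
  ⟨⟨stdCol n, fun h => stdCol_valid n h⟩⟩

lemma fan_chromaticNumber (n : ℕ) (hn : 2 ≤ n) :
    (fanGraph n).chromaticNumber = 3 := by
  have h2 : (2:ℕ) < n + 1 := by omega
  have h1 : (1:ℕ) < n + 1 := by omega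
  have h0 : (0:ℕ) < n + 1 := by omega
  have hnn : n < n + 1 := by omega
  refine le_antisymm ((fan_colorable n).chromaticNumber_le) ?_
  have hcl : (fanGraph n).IsClique ({⟨0,h0⟩, ⟨1,h1⟩, ⟨n,hnn⟩} : Finset (Fin (n+1))) := by
    intro a ha b hb hab
    simp only [Finset.coe_insert, Finset.coe_singleton, Set.mem_insert_iff,
      Set.mem_singleton_iff] at ha hb
    rw [fan_adj]
    refine ⟨hab, ?_⟩
    rcases ha with rfl | rfl | rfl <;> rcases hb with rfl | rfl | rfl <;>
      simp_all <;> omega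
  have := hcl.card_le_chromaticNumber
  have h01 : (⟨0,h0⟩ : Fin (n+1)) ≠ ⟨1,h1⟩ := by simp [Fin.ext_iff]
  have h0n : (⟨0,h0⟩ : Fin (n+1)) ≠ ⟨n,hnn⟩ := by simp [Fin.ext_iff]; omega
  have h1n : (⟨1,h1⟩ : Fin (n+1)) ≠ ⟨n,hnn⟩ := by simp [Fin.ext_iff]; omega
  have hcard : ({⟨0,h0⟩, ⟨1,h1⟩, ⟨n,hnn⟩} : Finset (Fin (n+1))).card = 3 := by
    rw [Finset.card_insert_of_notMem (by simp [Fin.ext_iff]; omega),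
      Finset.card_insert_of_notMem (by simp [Fin.ext_iff]; omega), Finset.card_singleton]
  rw [hcard] at this
  exact_mod_cast this

lemma fan_coloring_eq (n : ℕ) (c : (fanGraph n).Coloring (Fin 3))
    (hu : c ⟨n, Nat.lt_succ_self n⟩ = 0) (h0 : c ⟨0, Nat.succ_pos n⟩ = 1) :
    ∀ v, c v = stdCol n v := by
  have hne0 : ∀ (a : Fin (n+1)), (a:ℕ) ≠ n → c a ≠ 0 := by
    intro a ha
    have hadj : (fanGraph n).Adj a ⟨n, Nat.lt_succ_self n⟩ := by
      rw [fan_adj]; exact ⟨by simp [Fin.ext_iff, ha], Or.inr (Or.inl rfl)⟩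
    have := c.valid hadj
    rw [hu] at this; exact this
  have key : ∀ i (h : i < n), c ⟨i, by omega⟩ = if i % 2 = 0 then 1 else 2 := by
    intro i
    induction i with
    | zero => intro _; simpa using h0
    | succ i ih =>
      intro h
      have hi : i < n := by omega
      have hadj : (fanGraph n).Adj ⟨i, by omega⟩ ⟨i+1, by omega⟩ := by
        rw [fan_adj]
        exact ⟨by simp [Fin.ext_iff], Or.inl ⟨rfl, h⟩⟩
      have hne := c.valid hadj
      have h1 := ih hi
      have h2 := hne0 ⟨i+1, by omega⟩ (by show ¬(i+1 = n); omega)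
      rw [h1] at hne
      have hlt := (c ⟨i+1, by omega⟩).isLt
      split_ifs at hne ⊢ with hp hq <;> fin_omega
  intro v
  by_cases hv : (v:ℕ) = n
  · have : v = ⟨n, Nat.lt_succ_self n⟩ := Fin.ext hv
    rw [this, hu, stdCol, if_pos rfl]
  · have hvn : (v:ℕ) < n := by omega
    have := key v hvn
    rw [stdCol, if_neg hv]
    convert this using 2

lemma fan_sudoku_exists (n : ℕ) (hn : 2 ≤ n) :
    IsSudokuColoring (fanGraph n) 3
      (↑({⟨0, by omega⟩, ⟨n, by omega⟩} : Finset (Fin (n+1)))) (stdCol n) := by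
  refine ⟨⟨stdCol n, fun h => stdCol_valid n h⟩, fun v _ => rfl, ?_⟩
  intro c hc
  have hu : c ⟨n, Nat.lt_succ_self n⟩ = 0 := by
    have := hc ⟨n, by omega⟩ (by simp)
    rw [this, stdCol, if_pos rfl]
  have h0 : c ⟨0, Nat.succ_pos n⟩ = 1 := by
    have := hc ⟨0, by omega⟩ (by simp)
    rw [this, stdCol, if_neg (by show ¬(0 = n); omega), if_pos (by show 0 % 2 = 0; rfl)]
  have := fan_coloring_eq n c hu h0
  exact DFunLike.ext _ _ this

lemma fan_lower (n : ℕ) (hn : 2 ≤ n) (S : Finset (Fin (n+1))) (C₀ : Fin (n+1) → Fin 3)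
    (h : IsSudokuColoring (fanGraph n) 3 ↑S C₀) : 2 ≤ S.card := by
  by_contra hcard
  push_neg at hcard
  obtain ⟨c, hc, huniq⟩ := h
  have adj01 : (fanGraph n).Adj ⟨0, by omega⟩ ⟨1, by omega⟩ := by
    rw [fan_adj]
    exact ⟨by simp [Fin.ext_iff], Or.inl ⟨rfl, by show (1:ℕ) < n; omega⟩⟩
  have adj0u : (fanGraph n).Adj ⟨0, by omega⟩ ⟨n, by omega⟩ := by
    rw [fan_adj]
    exact ⟨by simp only [ne_eq, Fin.mk.injEq]; omega, Or.inr (Or.inl rfl)⟩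
  have adj1u : (fanGraph n).Adj ⟨1, by omega⟩ ⟨n, by omega⟩ := by
    rw [fan_adj]
    exact ⟨by simp only [ne_eq, Fin.mk.injEq]; omega, Or.inr (Or.inl rfl)⟩
  have h01 := c.valid adj01
  have h0u := c.valid adj0u
  have h1u := c.valid adj1u
  have key : ∀ x y : Fin (n+1), c x ≠ c y →
      (∀ v ∈ S, c x ≠ c v ∧ c y ≠ c v) → False := by
    intro x y hxy hS
    have hval : ∀ {a b}, (fanGraph n).Adj a b →
        Equiv.swap (c x) (c y) (c a) ≠ Equiv.swap (c x) (c y) (c b) :=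
      fun hadj heq => (c.valid hadj) ((Equiv.swap (c x) (c y)).injective heq)
    have heq := huniq (Coloring.mk (fun v => Equiv.swap (c x) (c y) (c v)) hval) ?_
    · have hx := DFunLike.congr_fun heq x
      simp only [Coloring.mk] at hx
      change Equiv.swap (c x) (c y) (c x) = c x at hx
      rw [Equiv.swap_apply_left] at hx
      exact hxy hx.symm
    · intro v hv
      obtain ⟨hxv, hyv⟩ := hS v hv
      show Equiv.swap (c x) (c y) (c v) = C₀ v
      rw [Equiv.swap_apply_of_ne_of_ne (Ne.symm hxv) (Ne.symm hyv)]
      exact hc v hv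
  interval_cases hSc : S.card
  · have hS : S = ∅ := Finset.card_eq_zero.mp hSc
    exact key ⟨0, by omega⟩ ⟨1, by omega⟩ h01 (by simp [hS])
  · obtain ⟨w, hw⟩ := Finset.card_eq_one.mp hSc
    subst hw
    by_cases hw0 : c ⟨0, by omega⟩ = c w
    · refine key ⟨1, by omega⟩ ⟨n, by omega⟩ h1u ?_
      intro v hv
      simp only [Finset.mem_singleton] at hv
      subst hv
      exact ⟨fun hh => h01 (hw0.trans hh.symm), fun hh => h0u (hw0.trans hh.symm)⟩
    · by_cases hw1 : c ⟨1, by omega⟩ = c w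
      · refine key ⟨0, by omega⟩ ⟨n, by omega⟩ h0u ?_
        intro v hv
        simp only [Finset.mem_singleton] at hv
        subst hv
        exact ⟨fun hh => hw0 hh, fun hh => h1u (hw1.trans hh.symm)⟩
      · refine key ⟨0, by omega⟩ ⟨1, by omega⟩ h01 ?_
        intro v hv
        simp only [Finset.mem_singleton] at hv
        subst hv
        exact ⟨hw0, hw1⟩

/-- For every `n ≥ 2`, the fan graph `F_n` has Sudoku number 2. -/
theorem sudokuNumber_fan (n : ℕ) (hn : 2 ≤ n) :
    sudokuNumber (fanGraph n) = 2 := by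
  have hchrom : (fanGraph n).chromaticNumber.toNat = 3 := by
    rw [fan_chromaticNumber n hn]; rfl
  unfold sudokuNumber
  rw [hchrom]
  have hmem : 2 ∈ {m | ∃ (S : Finset (Fin (n+1))) (C₀ : Fin (n+1) → Fin 3),
      IsSudokuColoring (fanGraph n) 3 ↑S C₀ ∧ S.card = m} := by
    refine ⟨{⟨0, by omega⟩, ⟨n, by omega⟩}, stdCol n, fan_sudoku_exists n hn, ?_⟩
    rw [Finset.card_insert_of_notMem (by simp [Fin.ext_iff]; omega),
      Finset.card_singleton]
  refine le_antisymm (Nat.sInf_le hmem) (le_csInf ⟨2, hmem⟩ ?_)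
  rintro m ⟨S, C₀, hsud, rfl⟩
  exact fan_lower n hn S C₀ hsud
end

section
/- For every even n ≥ 4, the wheel graph W_n satisfies sn(W_n) = 2. -/
open SimpleGraph

/-- The wheel graph `W_n`, obtained from the cycle `C_n = v_1 v_2 ⋯ v_n v_1` (vertices
`0, …, n - 1`) by joining a new vertex `u` (vertex `n`) to every vertex of the cycle. -/
def wheelGraph (n : ℕ) : SimpleGraph (Fin (n + 1)) :=
  SimpleGraph.fromRel fun a b =>
    ((a : ℕ) + 1 = (b : ℕ) ∧ (b : ℕ) < n) ∨
    ((a : ℕ) = 0 ∧ (b : ℕ) = n - 1) ∨ (b : ℕ) = n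

/-!
A 3-colouring of `W_n` is determined by the colours of the hub and of one rim vertex: the rim
then has to alternate between the two remaining colours, and for even `n` this alternation closes
up around the cycle. So two precoloured vertices suffice. Conversely, if a precoloured set `S`
misses two colours `a, b` of a graph with `χ = k`, composing the extension with the transposition
`(a b)` gives another extension unless the extension avoids `a` and `b` altogether, which would
colour the graph with `|S|` colours; hence `|S| ≥ k - 1`.
-/

namespace IsSudokuColoring

variable {V : Type*} {G : SimpleGraph V} {k : ℕ} {S : Finset V} {C₀ : V → Fin k}

theorem colorable_card (h : IsSudokuColoring G k S C₀) (hk : S.card + 2 ≤ k) :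
    G.Colorable S.card := by
  obtain ⟨c, hcS, hunique⟩ := h
  set T := S.image c
  have hrange : ∀ v, c v ∈ T := by
    intro v
    by_contra hv
    have hcard : (insert (c v) T).card < (Finset.univ : Finset (Fin k)).card := by
      have := Finset.card_insert_le (c v) T
      have : T.card ≤ S.card := Finset.card_image_le
      simp only [Finset.card_univ, Fintype.card_fin]
      omega
    obtain ⟨b, -, hb⟩ := Finset.exists_mem_notMem_of_card_lt_card hcard
    simp only [Finset.mem_insert, not_or] at hb
    obtain ⟨hbv, hbT⟩ := hb
    have hswap : G.recolorOfEquiv (Equiv.swap (c v) b) c = c := by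
      refine hunique _ fun w hw => ?_
      have hwT : c w ∈ T := Finset.mem_image_of_mem c hw
      rw [← hcS w hw]
      exact Equiv.swap_apply_of_ne_of_ne (fun h => hv (h ▸ hwT)) (fun h => hbT (h ▸ hwT))
    have hfix : Equiv.swap (c v) b (c v) = c v := DFunLike.congr_fun hswap v
    exact hbv (Equiv.swap_apply_left (c v) b ▸ hfix)
  exact (Coloring.mk (fun v => (⟨c v, hrange v⟩ : T)) fun hadj heq =>
    c.valid hadj (congrArg Subtype.val heq)).colorable.mono (by simpa using Finset.card_image_le)

theorem le_card_add_one (h : IsSudokuColoring G k S C₀) (hχ : G.chromaticNumber = k) :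
    k ≤ S.card + 1 := by
  by_contra! hk
  have := (h.colorable_card hk).chromaticNumber_le
  rw [hχ, Nat.cast_le] at this
  omega

end IsSudokuColoring

theorem sudokuNumber_eq_of_isSudokuColoring {V : Type*} [Fintype V] {G : SimpleGraph V} {k : ℕ}
    {S : Finset V} {C₀ : V → Fin (k + 1)} (hχ : G.chromaticNumber = k + 1)
    (hS : IsSudokuColoring G (k + 1) S C₀) (hcard : S.card = k) :
    sudokuNumber G = k := by
  have hk : G.chromaticNumber.toNat = k + 1 := by simp [hχ]
  rw [sudokuNumber, hk]
  refine le_antisymm (Nat.sInf_le ⟨S, C₀, hS, hcard⟩) (le_csInf ⟨k, S, C₀, hS, hcard⟩ ?_)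
  rintro _ ⟨S', C₀', hS', rfl⟩
  have := hS'.le_card_add_one (by rw [hχ]; norm_cast)
  omega

section Wheel

variable {n : ℕ}

theorem wheelGraph_adj_last {v : Fin (n + 1)} (hv : v ≠ Fin.last n) :
    (wheelGraph n).Adj v (Fin.last n) :=
  ⟨hv, Or.inl (Or.inr (Or.inr rfl))⟩

theorem wheelGraph_adj_succ {i : ℕ} (hi : i + 1 < n) :
    (wheelGraph n).Adj ⟨i, by omega⟩ ⟨i + 1, by omega⟩ :=
  ⟨by simp, Or.inl (Or.inl ⟨rfl, hi⟩)⟩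

def wheelColor (n : ℕ) (v : Fin (n + 1)) : Fin 3 :=
  if v = Fin.last n then 2 else ⟨v % 2, by omega⟩

-- Evenness of `n` is what makes the closing rim edge `{n - 1, 0}` bichromatic.
theorem wheelColor_ne_of_adj (he : Even n) {u v : Fin (n + 1)} (h : (wheelGraph n).Adj u v) :
    wheelColor n u ≠ wheelColor n v := by
  obtain ⟨huv, hr | hr⟩ := h <;>
  · simp only [wheelColor, ne_eq, Fin.ext_iff, Fin.val_last] at huv hr ⊢
    obtain ⟨m, rfl⟩ := he
    have := u.isLt
    have := v.isLt
    split_ifs <;> simp only [Fin.val_two] <;> omega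

def wheelColoring (he : Even n) : (wheelGraph n).Coloring (Fin 3) :=
  Coloring.mk (wheelColor n) (wheelColor_ne_of_adj he)

theorem wheelGraph_chromaticNumber (hn : 2 ≤ n) (he : Even n) :
    (wheelGraph n).chromaticNumber = 3 := by
  refine chromaticNumber_eq_iff_colorable_not_colorable.mpr ⟨⟨wheelColoring he⟩, ?_⟩
  rintro ⟨c⟩
  have h01 := c.valid (wheelGraph_adj_succ (i := 0) (by omega))
  have h0 := c.valid (wheelGraph_adj_last (v := ⟨0, by omega⟩) (by simp [Fin.ext_iff]; omega))
  have h1 := c.valid (wheelGraph_adj_last (v := ⟨0 + 1, by omega⟩) (by simp [Fin.ext_iff]; omega))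
  simp only [ne_eq, Fin.ext_iff] at h01 h0 h1
  omega

theorem coe_eq_wheelColor (c : (wheelGraph n).Coloring (Fin 3)) (h0 : c 0 = wheelColor n 0)
    (hlast : c (Fin.last n) = wheelColor n (Fin.last n)) : ⇑c = wheelColor n := by
  rw [wheelColor, if_pos rfl] at hlast
  have hrim : ∀ i (hi : i < n), c ⟨i, by omega⟩ = ⟨i % 2, by omega⟩ := by
    intro i
    induction i with
    | zero =>
      intro hi
      rw [Fin.mk_zero, h0, wheelColor, if_neg (Fin.ext_iff.not.mpr (by simp; omega))]
      simp
    | succ i ih =>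
      intro hi
      have hprev := c.valid (wheelGraph_adj_succ hi)
      have hhub := c.valid
        (wheelGraph_adj_last (v := ⟨i + 1, by omega⟩) (by simp [Fin.ext_iff]; omega))
      rw [ih (by omega)] at hprev
      rw [hlast] at hhub
      simp only [ne_eq, Fin.ext_iff, Fin.val_two] at hprev hhub ⊢
      omega
  funext v
  by_cases hv : v = Fin.last n
  · simp [wheelColor, hv, hlast]
  · simpa [wheelColor, hv] using hrim v (Fin.val_lt_last hv)

theorem isSudokuColoring_wheelGraph (he : Even n) :
    IsSudokuColoring (wheelGraph n) 3 ({0, Fin.last n} : Finset (Fin (n + 1))) (wheelColor n) :=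
  ⟨wheelColoring he, fun _ _ => rfl, fun c hc => DFunLike.coe_injective <| coe_eq_wheelColor c
    (hc 0 (by simp)) (hc _ (by simp))⟩

end Wheel

/-- For every even `n ≥ 4`, the wheel graph `W_n` has Sudoku number 2. -/
theorem sudokuNumber_wheel_even (n : ℕ) (hn : 4 ≤ n) (he : Even n) :
    sudokuNumber (wheelGraph n) = 2 :=
  sudokuNumber_eq_of_isSudokuColoring (by rw [wheelGraph_chromaticNumber (by omega) he]; rfl)
    (isSudokuColoring_wheelGraph he) (Finset.card_pair (by simp [Fin.ext_iff]; omega))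
end

section
/- Let G be a finite connected graph with chromatic number χ(G) = k ≥ 3, let S ⊂ V(G), and let C₀ be a Sudoku coloring of G defined on G[S]. Then the number r of distinct colors actually used by C₀ on S satisfies r = k − 1 or r = k; equivalently, if C₀ uses at most k − 2 distinct colors, then C₀ has more than one extension to a proper k-coloring of G. -/
open SimpleGraph

/-- Let `G` be a finite connected graph with chromatic number `k ≥ 3`, `S` a proper
subset of the vertex set, and `C₀` a Sudoku coloring of `G` defined on `G[S]` (i.e.
exactly one proper `k`-coloring of `G` restricts to `C₀` on `S`).  Then the number `r`
of distinct colors used by `C₀` on `S` satisfies `r = k - 1` or `r = k`. -/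
theorem sudoku_coloring_colors_used {V : Type*} [Fintype V] [DecidableEq V]
    (G : SimpleGraph V) (hconn : G.Connected) (k : ℕ) (hk : 3 ≤ k)
    (hχ : G.chromaticNumber = k) (S : Finset V) (hS : (S : Set V) ⊂ Set.univ)
    (C₀ : V → Fin k) (hsud : IsSudokuColoring G k S C₀) :
    (S.image C₀).card = k - 1 ∨ (S.image C₀).card = k := by
  obtain ⟨c, hc, huniq⟩ := hsud
  by_contra h
  push_neg at h
  obtain ⟨h1, h2⟩ := h
  have hle : (S.image C₀).card ≤ k := by
    have := Finset.card_le_card (Finset.subset_univ (S.image C₀))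
    simpa using this
  have hcompl : 1 < (Finset.univ \ S.image C₀).card := by
    rw [Finset.card_sdiff_of_subset (Finset.subset_univ _)]
    simp only [Finset.card_univ, Fintype.card_fin]
    omega
  obtain ⟨a, ha, b, hb, hab⟩ := Finset.one_lt_card.mp hcompl
  rw [Finset.mem_sdiff] at ha hb
  -- c is surjective since χ(G) = k
  have hsurj : Function.Surjective c := by
    intro x
    by_contra hx
    push_neg at hx
    have hcol : G.Coloring {y : Fin k // y ≠ x} :=
      SimpleGraph.Coloring.mk (fun v => ⟨c v, hx v⟩)
        (fun hadj => by simpa [Subtype.ext_iff] using c.valid hadj)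
    have hcard : Fintype.card {y : Fin k // y ≠ x} = k - 1 := by
      simp [Fintype.card_subtype_compl]
    have := hcol.colorable.chromaticNumber_le
    rw [hcard, hχ] at this
    have : k ≤ k - 1 := by exact_mod_cast this
    omega
  obtain ⟨v, hv⟩ := hsurj a
  -- swap colors a and b
  let c' : G.Coloring (Fin k) :=
    SimpleGraph.Coloring.mk (fun w => Equiv.swap a b (c w))
      (fun hadj => (Equiv.swap a b).injective.ne (c.valid hadj))
  have hc' : ∀ w ∈ S, c' w = C₀ w := by
    intro w hw
    have hmem : C₀ w ∈ S.image C₀ := Finset.mem_image_of_mem _ hw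
    have hna : C₀ w ≠ a := fun e => ha.2 (e ▸ hmem)
    have hnb : C₀ w ≠ b := fun e => hb.2 (e ▸ hmem)
    show Equiv.swap a b (c w) = C₀ w
    rw [hc w (by simpa using hw)]
    exact Equiv.swap_apply_of_ne_of_ne hna hnb
  have heq := huniq c' hc'
  have h3 : c' v = c v := by rw [heq]
  have h4 : Equiv.swap a b (c v) = c v := h3
  rw [hv, Equiv.swap_apply_left] at h4
  exact hab h4.symm
end
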